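/- arXiv:1203.5765 — 12 statements merged into one kernel-verified Lean document; each statement's English description precedes it below -/
import Mathlib

section
/- If G is a finite complete multipartite graph, then the distinguishing chromatic number of its complement equals the distinguishing number of its complement: χ_D(Ḡ) = D(Ḡ). -/
open SimpleGraph

variable {V : Type*} [Fintype V] [DecidableEq V]

/-- A coloring `f` with `r` colors is distinguishing for `G` if the identity is the
only automorphism of `G` preserving all colors. -/
def IsDistinguishing (G : SimpleGraph V) {r : ℕ} (f : V → Fin r) : Prop :=
  ∀ φ : G ≃g G, (∀ v, f (φ v) = f v) → ∀ v, φ v = v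

/-- A coloring is proper if adjacent vertices receive different colors. -/
def IsProperColoring (G : SimpleGraph V) {r : ℕ} (f : V → Fin r) : Prop :=
  ∀ u v, G.Adj u v → f u ≠ f v

/-- The distinguishing number of `G`: least `r` admitting a distinguishing coloring. -/
noncomputable def distNum (G : SimpleGraph V) : ℕ :=
  sInf {r : ℕ | ∃ f : V → Fin r, IsDistinguishing G f}

/-- The distinguishing chromatic number of `G`: least `r` admitting a proper
distinguishing coloring. -/
noncomputable def distChromNum (G : SimpleGraph V) : ℕ :=
  sInf {r : ℕ | ∃ f : V → Fin r, IsProperColoring G f ∧ IsDistinguishing G f}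

/-- The chromatic number of `G`, as a natural number. -/
noncomputable def chromNat {W : Type*} (G : SimpleGraph W) : ℕ :=
  G.chromaticNumber.toNat

/-- `G` is an NG-graph: `χ(G) + χ(Ḡ) = n + 1`. -/
def IsNG {W : Type*} [Finite W] (G : SimpleGraph W) : Prop :=
  chromNat G + chromNat Gᶜ = Nat.card W + 1

/-- `G` is an NGD-graph: `χ_D(G) + χ_D(Ḡ) = n + D(G)`. -/
noncomputable def IsNGD (G : SimpleGraph V) : Prop :=
  distChromNum G + distChromNum Gᶜ = Fintype.card V + distNum G

/-- `S` is an independent set of `G`. -/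
def IsIndepSet' (G : SimpleGraph V) (S : Set V) : Prop :=
  ∀ u ∈ S, ∀ v ∈ S, ¬ G.Adj u v

/-- The set of vertices of degree `χ(G) - 1`. -/
def setA (G : SimpleGraph V) [DecidableRel G.Adj] : Set V :=
  {v | G.degree v = chromNat G - 1}

/-- The set of vertices of degree greater than `χ(G) - 1`. -/
def setB (G : SimpleGraph V) [DecidableRel G.Adj] : Set V :=
  {v | G.degree v > chromNat G - 1}

/-- The set of vertices of degree less than `χ(G) - 1`. -/
def setC (G : SimpleGraph V) [DecidableRel G.Adj] : Set V :=
  {v | G.degree v < chromNat G - 1}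

/-- If `G` is complete multipartite (non-adjacency is transitive), then
`χ_D(Ḡ) = D(Ḡ)`. -/
theorem stmt1 (G : SimpleGraph V)
    (hmulti : ∀ u v w : V, ¬ G.Adj u v → ¬ G.Adj v w → ¬ G.Adj u w) :
    distChromNum Gᶜ = distNum Gᶜ := by
  unfold distChromNum distNum
  congr 1
  ext r
  simp only [Set.mem_setOf_eq]
  constructor
  · rintro ⟨f, _, hd⟩; exact ⟨f, hd⟩
  · rintro ⟨f, hd⟩
    refine ⟨f, ?_, hd⟩
    intro u v huv hfuv
    -- key transfer lemma
    have key : ∀ x y w : V, Gᶜ.Adj x y → Gᶜ.Adj x w → w ≠ y → Gᶜ.Adj y w := by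
      intro x y w hxy hxw hwy
      rw [compl_adj] at hxy hxw ⊢
      refine ⟨hwy.symm, hmulti y x w (fun h => hxy.2 h.symm) hxw.2⟩
    set σ := Equiv.swap u v with hσ
    have hdir : ∀ a b : V, Gᶜ.Adj a b → Gᶜ.Adj (σ a) (σ b) := by
      intro a b hab
      by_cases hau : a = u
      · subst hau
        by_cases hbv : b = v
        · subst hbv
          simpa [hσ, Equiv.swap_apply_left, Equiv.swap_apply_right] using hab.symm
        · have hba : b ≠ a := hab.ne'
          simp only [hσ, Equiv.swap_apply_left, Equiv.swap_apply_of_ne_of_ne hba hbv]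
          exact key a v b huv hab hbv
      · by_cases hav : a = v
        · subst hav
          by_cases hbu : b = u
          · subst hbu
            simpa [hσ, Equiv.swap_apply_left, Equiv.swap_apply_right] using hab.symm
          · have hba : b ≠ a := hab.ne'
            simp only [hσ, Equiv.swap_apply_right, Equiv.swap_apply_of_ne_of_ne hbu hba]
            exact key a u b huv.symm hab hbu
        · by_cases hbu : b = u
          · subst hbu
            simp only [hσ, Equiv.swap_apply_left, Equiv.swap_apply_of_ne_of_ne hau hav]
            exact (key b v a huv hab.symm hav).symm
          · by_cases hbv : b = v
            · subst hbv
              simp only [hσ, Equiv.swap_apply_right, Equiv.swap_apply_of_ne_of_ne hau hav]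
              exact (key b u a huv.symm hab.symm hau).symm
            · simp only [hσ, Equiv.swap_apply_of_ne_of_ne hau hav,
                Equiv.swap_apply_of_ne_of_ne hbu hbv]
              exact hab
    have hiff : ∀ a b : V, Gᶜ.Adj (σ a) (σ b) ↔ Gᶜ.Adj a b := by
      intro a b
      constructor
      · intro h
        have := hdir (σ a) (σ b) h
        simpa [hσ] using this
      · exact hdir a b
    let φ : Gᶜ ≃g Gᶜ := ⟨σ, fun {a b} => hiff a b⟩
    have hfix : ∀ w, f (φ w) = f w := by
      intro w
      show f (σ w) = f w
      by_cases hwu : w = u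
      · subst hwu; simpa [hσ, Equiv.swap_apply_left] using hfuv.symm
      · by_cases hwv : w = v
        · subst hwv; simpa [hσ, Equiv.swap_apply_right] using hfuv
        · simp [hσ, Equiv.swap_apply_of_ne_of_ne hwu hwv]
    have h1 : σ u = u := hd φ hfix u
    rw [hσ, Equiv.swap_apply_left] at h1
    exact huv.ne h1.symm
end

section
/- For every finite simple graph G with n = |V(G)|, the distinguishing chromatic numbers of G and its complement satisfy χ_D(G) + χ_D(Ḡ) ≤ n + D(G). -/
open SimpleGraph

variable {V : Type*} [Fintype V] [DecidableEq V]

section AuxLemmas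

universe u

/-- Extend a coloring defined off `v` by assigning `v` a color not used on its
`R`-neighbors. -/
private lemma extend_col {W : Type u} [DecidableEq W] {R : W → W → Prop}
    (hs : ∀ u w, R u w → R w u) {v : W} (hirr : ¬ R v v) {a : ℕ}
    {p : {w : W // w ≠ v} → Fin a}
    (hp : ∀ u w, R u.1 w.1 → p u ≠ p w) {x : Fin a}
    (hx : ∀ w : {w : W // w ≠ v}, R w.1 v → p w ≠ x) :
    ∃ p' : W → Fin a, ∀ u w, R u w → p' u ≠ p' w := by
  refine ⟨fun w => if h : w = v then x else p ⟨w, h⟩, fun u w hR => ?_⟩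
  by_cases hu : u = v
  · subst hu
    by_cases hw : w = u
    · subst hw; exact absurd hR hirr
    · simp only [dif_pos rfl, dif_neg hw]
      exact fun h => hx ⟨w, hw⟩ (hs _ _ hR) h.symm
  · by_cases hw : w = v
    · subst hw
      simp only [dif_neg hu, dif_pos rfl]
      exact hx ⟨u, hu⟩ hR
    · simp only [dif_neg hu, dif_neg hw]
      exact hp ⟨u, hu⟩ ⟨w, hw⟩ hR

/-- Nordhaus–Gaddum in coloring form: any graph on `n` vertices admits a proper
coloring with `a` colors and a proper coloring of its complement with `b` colors,
with `a + b ≤ n + 1`. -/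
private lemma NGfun : ∀ (n : ℕ) (W : Type u) [Fintype W] [DecidableEq W]
    (H : SimpleGraph W), Fintype.card W = n →
    ∃ (a b : ℕ) (p : W → Fin a) (q : W → Fin b),
      (∀ u w, H.Adj u w → p u ≠ p w) ∧
      (∀ u w, u ≠ w → ¬ H.Adj u w → q u ≠ q w) ∧ a + b ≤ n + 1 := by
  intro n
  induction n with
  | zero =>
    intro W _ _ H hcard
    have hW : IsEmpty W := Fintype.card_eq_zero_iff.mp hcard
    exact ⟨0, 0, fun w => (hW.false w).elim, fun w => (hW.false w).elim,
      fun u => (hW.false u).elim, fun u => (hW.false u).elim, by omega⟩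
  | succ n ih =>
    intro W _ _ H hcard
    classical
    obtain ⟨v⟩ : Nonempty W := Fintype.card_pos_iff.mp (by omega)
    have hcard' : Fintype.card {w : W // w ≠ v} = n := by
      have h1 := Fintype.card_subtype_compl (fun w : W => w = v)
      rw [Fintype.card_subtype_eq] at h1
      have : Fintype.card {w : W // w ≠ v} = Fintype.card {w : W // ¬ w = v} := rfl
      omega
    obtain ⟨a, b, p, q, hp, hq, hab⟩ :=
      ih {w : W // w ≠ v} (SimpleGraph.comap Subtype.val H) hcard'
    have hp' : ∀ u w : {w : W // w ≠ v}, H.Adj u.1 w.1 → p u ≠ p w := hp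
    -- complement relation
    set Rc : W → W → Prop := fun u w => u ≠ w ∧ ¬ H.Adj u w with hRc
    have hRcs : ∀ u w, Rc u w → Rc w u := fun u w h => ⟨h.1.symm, fun h' => h.2 h'.symm⟩
    have hRcirr : ¬ Rc v v := fun h => h.1 rfl
    have hq' : ∀ u w : {w : W // w ≠ v}, Rc u.1 w.1 → q u ≠ q w := by
      intro u w h
      exact hq u w (fun e => h.1 (congrArg Subtype.val e)) h.2
    -- fresh-color extensions
    have freshP : ∃ p' : W → Fin (a + 1), ∀ u w, H.Adj u w → p' u ≠ p' w := by
      refine extend_col (p := fun w => Fin.castSucc (p w)) (x := Fin.last a)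
        (fun u w h => h.symm) (H.irrefl) ?_ ?_
      · intro u w h e
        exact hp' u w h (Fin.castSucc_injective _ e)
      · intro w _
        exact (Fin.castSucc_lt_last _).ne
    have freshQ : ∃ q' : W → Fin (b + 1), ∀ u w, Rc u w → q' u ≠ q' w := by
      refine extend_col (p := fun w => Fin.castSucc (q w)) (x := Fin.last b)
        hRcs hRcirr ?_ ?_
      · intro u w h e
        exact hq' u w h (Fin.castSucc_injective _ e)
      · intro w _
        exact (Fin.castSucc_lt_last _).ne
    -- neighbor/non-neighbor finsets
    set Nf : Finset {w : W // w ≠ v} := Finset.univ.filter (fun w => H.Adj w.1 v) with hNf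
    set Mf : Finset {w : W // w ≠ v} := Finset.univ.filter (fun w => ¬ H.Adj w.1 v) with hMf
    have hNM : Nf.card + Mf.card = n := by
      rw [hNf, hMf, Finset.card_filter_add_card_filter_not]
      simpa using hcard'
    by_cases h1 : (Nf.image p).card < a
    · -- reuse a color for p at v, fresh color for q
      have hex : ∃ x : Fin a, x ∉ Nf.image p := by
        by_contra hcon
        push_neg at hcon
        have : (Nf.image p) = Finset.univ := Finset.eq_univ_iff_forall.mpr hcon
        rw [this] at h1
        simp at h1
      obtain ⟨x, hxmem⟩ := hex
      have hx : ∀ w : {w : W // w ≠ v}, H.Adj w.1 v → p w ≠ x := by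
        intro w hw he
        exact hxmem (he ▸ Finset.mem_image_of_mem p (by simp [hNf, hw]))
      obtain ⟨p', hp''⟩ := extend_col (fun u w h => h.symm) (H.irrefl) hp' hx
      obtain ⟨q', hq''⟩ := freshQ
      exact ⟨a, b + 1, p', q', hp'',
        fun u w h1 h2 => hq'' u w ⟨h1, h2⟩, by omega⟩
    · by_cases h2 : (Mf.image q).card < b
      · -- reuse a color for q at v, fresh color for p
        have hex : ∃ x : Fin b, x ∉ Mf.image q := by
          by_contra hcon
          push_neg at hcon
          have : (Mf.image q) = Finset.univ := Finset.eq_univ_iff_forall.mpr hcon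
          rw [this] at h2
          simp at h2
        obtain ⟨x, hxmem⟩ := hex
        have hx : ∀ w : {w : W // w ≠ v}, Rc w.1 v → q w ≠ x := by
          intro w hw he
          exact hxmem (he ▸ Finset.mem_image_of_mem q (by simp [hMf, hw.2]))
        obtain ⟨q', hq''⟩ := extend_col hRcs hRcirr hq' hx
        obtain ⟨p', hp''⟩ := freshP
        exact ⟨a + 1, b, p', q', hp'',
          fun u w h1 h2 => hq'' u w ⟨h1, h2⟩, by omega⟩
      · -- both degrees large: a + b ≤ n, add fresh colors to both
        have ha : a ≤ Nf.card :=
          le_trans (not_lt.mp h1) (Finset.card_image_le)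
        have hb : b ≤ Mf.card :=
          le_trans (not_lt.mp h2) (Finset.card_image_le)
        obtain ⟨p', hp''⟩ := freshP
        obtain ⟨q', hq''⟩ := freshQ
        exact ⟨a + 1, b + 1, p', q', hp'',
          fun u w h1 h2 => hq'' u w ⟨h1, h2⟩, by omega⟩

/-- A distinguishing coloring of `G` is also distinguishing for `Gᶜ`. -/
private lemma IsDistinguishing.compl {G : SimpleGraph V} {r : ℕ} {f : V → Fin r}
    (hf : IsDistinguishing G f) : IsDistinguishing Gᶜ f := by
  intro φ hφ v
  have hmap : ∀ u w : V, G.Adj (φ u) (φ w) ↔ G.Adj u w := by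
    intro u w
    by_cases h : u = w
    · subst h; simp
    · have h2 : Gᶜ.Adj (φ u) (φ w) ↔ Gᶜ.Adj u w := φ.map_adj_iff
      have hne : φ u ≠ φ w := fun he => h (φ.toEquiv.injective he)
      simp only [SimpleGraph.compl_adj] at h2
      constructor
      · intro hAdj
        by_contra hc
        exact (h2.mpr ⟨h, hc⟩).2 hAdj
      · intro hAdj
        by_contra hc
        exact (h2.mp ⟨hne, hc⟩).2 hAdj
  exact hf ⟨φ.toEquiv, @fun u w => hmap u w⟩ hφ v

end AuxLemmas

/-- `χ_D(G) + χ_D(Ḡ) ≤ n + D(G)`. -/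
theorem stmt2 (G : SimpleGraph V) :
    distChromNum G + distChromNum Gᶜ ≤ Fintype.card V + distNum G := by
  classical
  set d := distNum G with hd
  -- a distinguishing coloring with `distNum G` colors exists
  have hmem : d ∈ {r : ℕ | ∃ f : V → Fin r, IsDistinguishing G f} := by
    rw [hd]
    apply Nat.sInf_mem
    refine ⟨Fintype.card V, fun v => Fintype.equivFin V v, ?_⟩
    intro φ hφ v
    exact (Fintype.equivFin V).injective (hφ v)
  obtain ⟨f, hf⟩ := hmem
  -- per color-class Nordhaus–Gaddum colorings
  have key : ∀ c : Fin d, ∃ (a b : ℕ) (p : {v : V // f v = c} → Fin a)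
      (q : {v : V // f v = c} → Fin b),
      (∀ u w, G.Adj u.1 w.1 → p u ≠ p w) ∧
      (∀ u w, u ≠ w → ¬ G.Adj u.1 w.1 → q u ≠ q w) ∧
      a + b ≤ Fintype.card {v : V // f v = c} + 1 :=
    fun c => NGfun _ _ (SimpleGraph.comap Subtype.val G) rfl
  choose a b p q hp hq hab using key
  -- global colorings
  let h₁ : V → Σ c : Fin d, Fin (a c) := fun v => ⟨f v, p (f v) ⟨v, rfl⟩⟩
  let h₂ : V → Σ c : Fin d, Fin (b c) := fun v => ⟨f v, q (f v) ⟨v, rfl⟩⟩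
  have hgen₁ : ∀ (v : V) (c : Fin d) (h : f v = c), h₁ v = ⟨c, p c ⟨v, h⟩⟩ := by
    intro v c h; subst h; rfl
  have hgen₂ : ∀ (v : V) (c : Fin d) (h : f v = c), h₂ v = ⟨c, q c ⟨v, h⟩⟩ := by
    intro v c h; subst h; rfl
  set r₁ := Fintype.card (Σ c : Fin d, Fin (a c)) with hr₁
  set r₂ := Fintype.card (Σ c : Fin d, Fin (b c)) with hr₂
  let e₁ := Fintype.equivFin (Σ c : Fin d, Fin (a c))
  let e₂ := Fintype.equivFin (Σ c : Fin d, Fin (b c))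
  have mem₁ : r₁ ∈ {r : ℕ | ∃ g : V → Fin r,
      IsProperColoring G g ∧ IsDistinguishing G g} := by
    refine ⟨fun v => e₁ (h₁ v), ?_, ?_⟩
    · intro u w hadj heq
      have heq1 : h₁ u = h₁ w := e₁.injective heq
      have hfc : f u = f w := congrArg Sigma.fst heq1
      rw [hgen₁ u (f w) hfc, hgen₁ w (f w) rfl] at heq1
      have : p (f w) ⟨u, hfc⟩ = p (f w) ⟨w, rfl⟩ := by
        simpa using heq1
      exact hp (f w) ⟨u, hfc⟩ ⟨w, rfl⟩ hadj this
    · intro φ hφ v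
      refine hf φ (fun w => ?_) v
      have h5 : h₁ (φ w) = h₁ w := e₁.injective (hφ w)
      exact congrArg Sigma.fst h5
  have mem₂ : r₂ ∈ {r : ℕ | ∃ g : V → Fin r,
      IsProperColoring Gᶜ g ∧ IsDistinguishing Gᶜ g} := by
    refine ⟨fun v => e₂ (h₂ v), ?_, ?_⟩
    · intro u w hadj heq
      rw [SimpleGraph.compl_adj] at hadj
      have heq1 : h₂ u = h₂ w := e₂.injective heq
      have hfc : f u = f w := congrArg Sigma.fst heq1
      rw [hgen₂ u (f w) hfc, hgen₂ w (f w) rfl] at heq1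
      have : q (f w) ⟨u, hfc⟩ = q (f w) ⟨w, rfl⟩ := by
        simpa using heq1
      refine hq (f w) ⟨u, hfc⟩ ⟨w, rfl⟩ ?_ hadj.2 this
      exact fun e => hadj.1 (congrArg Subtype.val e)
    · intro φ hφ v
      refine hf.compl φ (fun w => ?_) v
      have h5 : h₂ (φ w) = h₂ w := e₂.injective (hφ w)
      exact congrArg Sigma.fst h5
  have le₁ : distChromNum G ≤ r₁ := Nat.sInf_le mem₁
  have le₂ : distChromNum Gᶜ ≤ r₂ := Nat.sInf_le mem₂
  -- counting
  have hsum : r₁ + r₂ ≤ Fintype.card V + d := by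
    have h1 : r₁ = ∑ c : Fin d, a c := by simp [hr₁]
    have h2 : r₂ = ∑ c : Fin d, b c := by simp [hr₂]
    have h3 : ∑ c : Fin d, Fintype.card {v : V // f v = c} = Fintype.card V := by
      rw [← Fintype.card_sigma]
      exact Fintype.card_congr (Equiv.sigmaFiberEquiv f)
    calc r₁ + r₂ = ∑ c : Fin d, (a c + b c) := by
          rw [h1, h2, Finset.sum_add_distrib]
      _ ≤ ∑ c : Fin d, (Fintype.card {v : V // f v = c} + 1) :=
          Finset.sum_le_sum (fun c _ => hab c)
      _ = Fintype.card V + d := by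
          rw [Finset.sum_add_distrib, h3]
          simp
  omega
end

section
/- For every finite simple graph G with n = |V(G)|, the product of the distinguishing chromatic numbers of G and its complement satisfies χ_D(G) · χ_D(Ḡ) ≤ ((n + D(G))/2)², i.e., 4 · χ_D(G) · χ_D(Ḡ) ≤ (n + D(G))². -/
open SimpleGraph
open scoped Classical

variable {V : Type*} [Fintype V] [DecidableEq V]

/-- Nordhaus–Gaddum, constructive form. -/
lemma NG_aux.{u} : ∀ (m : ℕ) (W : Type u) [Fintype W] (H : SimpleGraph W), Fintype.card W = m →
    ∃ (a b : ℕ) (f : W → Fin a) (g : W → Fin b),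
      (∀ u v, H.Adj u v → f u ≠ f v) ∧ (∀ u v, Hᶜ.Adj u v → g u ≠ g v) ∧ a + b ≤ m + 1 := by
  intro m
  induction m with
  | zero =>
    intro W _ H hcard
    have : IsEmpty W := Fintype.card_eq_zero_iff.mp hcard
    exact ⟨0, 0, fun w => isEmptyElim w, fun w => isEmptyElim w,
      fun u => isEmptyElim u, fun u => isEmptyElim u, by omega⟩
  | succ m ih =>
    intro W _ H hcard
    have hne : Nonempty W := Fintype.card_pos_iff.mp (by omega)
    obtain ⟨v⟩ := hne
    let W' := {w : W // w ≠ v}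
    have hcard' : Fintype.card W' = m := by
      have h1 : Fintype.card {w : W // ¬ w = v} = Fintype.card W - Fintype.card {w : W // w = v} :=
        Fintype.card_subtype_compl (p := fun w => w = v)
      rw [Fintype.card_subtype_eq, hcard] at h1
      simpa [W'] using h1
    let H' : SimpleGraph W' := H.comap Subtype.val
    obtain ⟨a, b, f, g, hf, hg, hab⟩ := ih W' H' hcard'
    -- properness of g transfers to Hᶜ on W'
    have hg' : ∀ (x y : W'), Hᶜ.Adj x.1 y.1 → g x ≠ g y := by
      intro x y hxy
      apply hg
      simp only [compl_adj] at hxy ⊢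
      exact ⟨fun h => hxy.1 (congrArg Subtype.val h), hxy.2⟩
    by_cases h1 : ∃ c : Fin a, ∀ w : W', H.Adj v w.1 → f w ≠ c
    · obtain ⟨c, hc⟩ := h1
      refine ⟨a, b + 1,
        (fun w => if h : w = v then c else f ⟨w, h⟩),
        (fun w => if h : w = v then Fin.last b else (g ⟨w, h⟩).castSucc), ?_, ?_, by omega⟩
      · intro x y hxy hfeq
        have hne : x ≠ y := hxy.ne
        by_cases hx : x = v <;> by_cases hy : y = v
        · exact hne (hx.trans hy.symm)
        · subst hx; simp [hy] at hfeq
          exact hc ⟨y, hy⟩ hxy hfeq.symm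
        · subst hy; simp [hx] at hfeq
          exact hc ⟨x, hx⟩ (H.adj_symm hxy) hfeq
        · simp [hx, hy] at hfeq
          exact hf ⟨x, hx⟩ ⟨y, hy⟩ (by simpa [H'] using hxy) hfeq
      · intro x y hxy hgeq
        by_cases hx : x = v <;> by_cases hy : y = v
        · exact hxy.ne (hx.trans hy.symm)
        · subst hx; simp [hy] at hgeq
          exact absurd hgeq.symm (Fin.castSucc_lt_last _).ne
        · subst hy; simp [hx] at hgeq
        · simp [hx, hy, Fin.castSucc_inj] at hgeq
          exact hg' ⟨x, hx⟩ ⟨y, hy⟩ hxy hgeq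
    · by_cases h2 : ∃ c : Fin b, ∀ w : W', Hᶜ.Adj v w.1 → g w ≠ c
      · obtain ⟨c, hc⟩ := h2
        refine ⟨a + 1, b,
          (fun w => if h : w = v then Fin.last a else (f ⟨w, h⟩).castSucc),
          (fun w => if h : w = v then c else g ⟨w, h⟩), ?_, ?_, by omega⟩
        · intro x y hxy hfeq
          by_cases hx : x = v <;> by_cases hy : y = v
          · exact hxy.ne (hx.trans hy.symm)
          · subst hx; simp [hy] at hfeq
            exact absurd hfeq.symm (Fin.castSucc_lt_last _).ne
          · subst hy; simp [hx] at hfeq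
          · simp [hx, hy, Fin.castSucc_inj] at hfeq
            exact hf ⟨x, hx⟩ ⟨y, hy⟩ (by simpa [H'] using hxy) hfeq
        · intro x y hxy hgeq
          have hne : x ≠ y := hxy.ne
          by_cases hx : x = v <;> by_cases hy : y = v
          · exact hne (hx.trans hy.symm)
          · subst hx; simp [hy] at hgeq
            exact hc ⟨y, hy⟩ hxy hgeq.symm
          · subst hy; simp [hx] at hgeq
            exact hc ⟨x, hx⟩ (Hᶜ.adj_symm hxy) hgeq
          · simp [hx, hy] at hgeq
            exact hg' ⟨x, hx⟩ ⟨y, hy⟩ hxy hgeq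
      · -- every color appears among neighbors / non-neighbors: a + b ≤ m
        push_neg at h1 h2
        have key : a + b ≤ m := by
          choose nb hnb1 hnb2 using h1
          choose nnb hnnb1 hnnb2 using h2
          classical
          let s : Finset W' := Finset.univ.image nb
          let t : Finset W' := Finset.univ.image nnb
          have hs : a ≤ s.card := by
            have : Function.Injective nb := by
              intro c c' hcc'
              rw [← hnb2 c, ← hnb2 c', hcc']
            calc a = (Finset.univ : Finset (Fin a)).card := by simp
              _ ≤ s.card := Finset.card_le_card_of_injOn nb (by simp [s]) (fun x _ y _ h => this h)
          have ht : b ≤ t.card := by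
            have : Function.Injective nnb := by
              intro c c' hcc'
              rw [← hnnb2 c, ← hnnb2 c', hcc']
            calc b = (Finset.univ : Finset (Fin b)).card := by simp
              _ ≤ t.card := Finset.card_le_card_of_injOn nnb (by simp [t]) (fun x _ y _ h => this h)
          have hdisj : Disjoint s t := by
            rw [Finset.disjoint_left]
            intro x hxs hxt
            simp only [s, t, Finset.mem_image] at hxs hxt
            obtain ⟨c, -, hc⟩ := hxs
            obtain ⟨c', -, hc'⟩ := hxt
            have h1' := hnb1 c
            have h2' := hnnb1 c'
            rw [hc] at h1'
            rw [hc'] at h2'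
            exact h2'.2 h1'
          calc a + b ≤ s.card + t.card := by omega
            _ = (s ∪ t).card := (Finset.card_union_of_disjoint hdisj).symm
            _ ≤ Fintype.card W' := by
                simpa using Finset.card_le_card (Finset.subset_univ (s ∪ t))
            _ = m := hcard'
        refine ⟨a + 1, b + 1,
          (fun w => if h : w = v then Fin.last a else (f ⟨w, h⟩).castSucc),
          (fun w => if h : w = v then Fin.last b else (g ⟨w, h⟩).castSucc), ?_, ?_, by omega⟩
        · intro x y hxy hfeq
          by_cases hx : x = v <;> by_cases hy : y = v
          · exact hxy.ne (hx.trans hy.symm)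
          · subst hx; simp [hy] at hfeq
            exact absurd hfeq.symm (Fin.castSucc_lt_last _).ne
          · subst hy; simp [hx] at hfeq
          · simp [hx, hy, Fin.castSucc_inj] at hfeq
            exact hf ⟨x, hx⟩ ⟨y, hy⟩ (by simpa [H'] using hxy) hfeq
        · intro x y hxy hgeq
          by_cases hx : x = v <;> by_cases hy : y = v
          · exact hxy.ne (hx.trans hy.symm)
          · subst hx; simp [hy] at hgeq
            exact absurd hgeq.symm (Fin.castSucc_lt_last _).ne
          · subst hy; simp [hx] at hgeq
          · simp [hx, hy, Fin.castSucc_inj] at hgeq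
            exact hg' ⟨x, hx⟩ ⟨y, hy⟩ hxy hgeq

/-- an automorphism of the complement gives one of the graph -/
def complIso (G : SimpleGraph V) (φ : Gᶜ ≃g Gᶜ) : G ≃g G where
  toEquiv := φ.toEquiv
  map_rel_iff' := by
    intro u v
    have h := φ.map_rel_iff' (a := u) (b := v)
    simp only [compl_adj] at h
    constructor
    · intro h'
      by_contra hadj
      have hne : u ≠ v := fun h'' => h'.ne (congrArg φ h'')
      have := h.mpr ⟨hne, hadj⟩
      exact this.2 h'
    · intro h'
      by_contra hadj
      have hne : φ u ≠ φ v := fun h'' => h'.ne (φ.toEquiv.injective h'')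
      have := h.mp ⟨hne, hadj⟩
      exact this.2 h'

lemma distNum_mem (G : SimpleGraph V) :
    ∃ f : V → Fin (distNum G), IsDistinguishing G f := by
  have hne : {r : ℕ | ∃ f : V → Fin r, IsDistinguishing G f}.Nonempty := by
    refine ⟨Fintype.card V, Fintype.equivFin V, ?_⟩
    intro φ hφ v
    exact (Fintype.equivFin V).injective (hφ v)
  exact Nat.sInf_mem hne

lemma key_sum (G : SimpleGraph V) :
    ∃ (a b : ℕ) (f : V → Fin a) (g : V → Fin b),
      IsProperColoring G f ∧ IsDistinguishing G f ∧
      IsProperColoring Gᶜ g ∧ IsDistinguishing Gᶜ g ∧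
      a + b ≤ Fintype.card V + distNum G := by
  classical
  obtain ⟨q, hq⟩ := distNum_mem G
  let S : Fin (distNum G) → Type _ := fun i => {x : V // q x = i}
  have hNG : ∀ i, ∃ (a b : ℕ) (f : S i → Fin a) (g : S i → Fin b),
      (∀ u v, (G.comap (Subtype.val : S i → V)).Adj u v → f u ≠ f v) ∧
      (∀ u v, (G.comap (Subtype.val : S i → V))ᶜ.Adj u v → g u ≠ g v) ∧
      a + b ≤ Fintype.card (S i) + 1 := fun i =>
    NG_aux (Fintype.card (S i)) (S i) (G.comap Subtype.val) rfl
  choose a b f g hf hg hab using hNG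
  have hsum : ∑ i, Fintype.card (S i) = Fintype.card V :=
    (Fintype.card_sigma).symm.trans (Fintype.card_congr (Equiv.sigmaFiberEquiv q))
  have hcardA : Fintype.card (Σ i, Fin (a i)) = ∑ i, a i := by simp
  have hcardB : Fintype.card (Σ i, Fin (b i)) = ∑ i, b i := by simp
  let eA : (Σ i, Fin (a i)) ≃ Fin (∑ i, a i) := Fintype.equivFinOfCardEq hcardA
  let eB : (Σ i, Fin (b i)) ≃ Fin (∑ i, b i) := Fintype.equivFinOfCardEq hcardB
  let F : V → Fin (∑ i, a i) := fun v => eA ⟨q v, f (q v) ⟨v, rfl⟩⟩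
  let Gc : V → Fin (∑ i, b i) := fun v => eB ⟨q v, g (q v) ⟨v, rfl⟩⟩
  have congf : ∀ (i j : Fin (distNum G)) (_ : i = j) (x : V) (hx : q x = i) (hx' : q x = j),
      ((f i ⟨x, hx⟩ : Fin (a i)) : ℕ) = ((f j ⟨x, hx'⟩ : Fin (a j)) : ℕ) := by
    rintro i j rfl x hx hx'; rfl
  have congg : ∀ (i j : Fin (distNum G)) (_ : i = j) (x : V) (hx : q x = i) (hx' : q x = j),
      ((g i ⟨x, hx⟩ : Fin (b i)) : ℕ) = ((g j ⟨x, hx'⟩ : Fin (b j)) : ℕ) := by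
    rintro i j rfl x hx hx'; rfl
  have hFeq : ∀ u v : V, F u = F v → q u = q v := fun u v h =>
    congrArg Sigma.fst (eA.injective h)
  have hGeq : ∀ u v : V, Gc u = Gc v → q u = q v := fun u v h =>
    congrArg Sigma.fst (eB.injective h)
  refine ⟨∑ i, a i, ∑ i, b i, F, Gc, ?_, ?_, ?_, ?_, ?_⟩
  · intro u v huv hFuv
    have hquv : q u = q v := hFeq u v hFuv
    have h2 := eA.injective hFuv
    have hval : ((f (q u) ⟨u, rfl⟩ : Fin (a (q u))) : ℕ) = ((f (q v) ⟨v, rfl⟩ : Fin (a (q v))) : ℕ) :=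
      congrArg (fun p : Σ i, Fin (a i) => (p.2 : ℕ)) h2
    have hval2 := congf (q v) (q u) hquv.symm v rfl hquv.symm
    refine hf (q u) ⟨u, rfl⟩ ⟨v, hquv.symm⟩ (by simpa using huv) (Fin.val_injective ?_)
    rw [hval, hval2]
  · intro φ hφ v
    exact hq φ (fun w => hFeq _ _ (hφ w)) v
  · intro u v huv hGuv
    have hquv : q u = q v := hGeq u v hGuv
    have h2 := eB.injective hGuv
    have hval : ((g (q u) ⟨u, rfl⟩ : Fin (b (q u))) : ℕ) = ((g (q v) ⟨v, rfl⟩ : Fin (b (q v))) : ℕ) :=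
      congrArg (fun p : Σ i, Fin (b i) => (p.2 : ℕ)) h2
    have hval2 := congg (q v) (q u) hquv.symm v rfl hquv.symm
    refine hg (q u) ⟨u, rfl⟩ ⟨v, hquv.symm⟩ ?_ (Fin.val_injective ?_)
    · rw [compl_adj]
      exact ⟨fun h => huv.ne (congrArg Subtype.val h), by simpa using huv.2⟩
    · rw [hval, hval2]
  · intro φ hφ v
    exact hq (complIso G φ) (fun w => hGeq _ _ (hφ w)) v
  · calc (∑ i, a i) + ∑ i, b i = ∑ i, (a i + b i) := by rw [Finset.sum_add_distrib]
      _ ≤ ∑ i, (Fintype.card (S i) + 1) := Finset.sum_le_sum (fun i _ => hab i)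
      _ = Fintype.card V + distNum G := by
          rw [Finset.sum_add_distrib, hsum]; simp

/-- `4 · χ_D(G) · χ_D(Ḡ) ≤ (n + D(G))²`. -/
theorem stmt3 (G : SimpleGraph V) :
    4 * (distChromNum G * distChromNum Gᶜ) ≤ (Fintype.card V + distNum G) ^ 2 := by
  obtain ⟨a, b, f, g, hfp, hfd, hgp, hgd, hab⟩ := key_sum G
  have hA : distChromNum G ≤ a := Nat.sInf_le ⟨f, hfp, hfd⟩
  have hB : distChromNum Gᶜ ≤ b := Nat.sInf_le ⟨g, hgp, hgd⟩
  nlinarith [hA, hB, hab, sq_nonneg (a - b : ℤ)]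
end

section
/- Let G be a finite simple graph with n = |V(G)| and let Γ be a subgroup of the automorphism group Aut(G) (note that Aut(G) = Aut(Ḡ), since every automorphism of G is an automorphism of Ḡ). Then χ_D^Γ(G) + χ_D^Γ(Ḡ) ≤ n + D^Γ(G). -/
open SimpleGraph

variable {V : Type*} [Fintype V] [DecidableEq V]

/-- A coloring is `Γ`-distinguishing if the identity is the only element of `Γ`
preserving all colors. -/
def IsGammaDistinguishing (Γ : Subgroup (Equiv.Perm V)) {r : ℕ} (f : V → Fin r) : Prop :=
  ∀ φ ∈ Γ, (∀ v, f (φ v) = f v) → φ = 1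

/-- The distinguishing number of `G` with respect to `Γ`. -/
noncomputable def distNumGamma (Γ : Subgroup (Equiv.Perm V)) : ℕ :=
  sInf {r : ℕ | ∃ f : V → Fin r, IsGammaDistinguishing Γ f}

/-- The distinguishing chromatic number of `G` with respect to `Γ`. -/
noncomputable def distChromNumGamma (G : SimpleGraph V) (Γ : Subgroup (Equiv.Perm V)) : ℕ :=
  sInf {r : ℕ | ∃ f : V → Fin r, IsProperColoring G f ∧ IsGammaDistinguishing Γ f}



open SimpleGraph Finset

universe u

/-- Nordhaus–Gaddum-type existence: a graph and its complement admit proper colorings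
with `a + b ≤ n + 1` colors in total. -/
theorem myNG (m : ℕ) : ∀ (W : Type u) [Fintype W] [DecidableEq W] (H : SimpleGraph W),
    Fintype.card W ≤ m →
    ∃ (a b : ℕ) (f : W → Fin a) (h : W → Fin b),
      (∀ u v, H.Adj u v → f u ≠ f v) ∧
      (∀ u v : W, u ≠ v → ¬H.Adj u v → h u ≠ h v) ∧
      a + b ≤ Fintype.card W + 1 := by
  induction m with
  | zero =>
    intro W _ _ H hcard
    have : IsEmpty W := Fintype.card_eq_zero_iff.mp (Nat.le_zero.mp hcard)
    exact ⟨0, 0, fun w => isEmptyElim w, fun w => isEmptyElim w,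
      fun u => isEmptyElim u, fun u => isEmptyElim u, by omega⟩
  | succ m IH =>
    intro W _ _ H hcard
    classical
    by_cases hle : Fintype.card W ≤ m
    · exact IH W H hle
    push_neg at hle
    have hcW : Fintype.card W = m + 1 := le_antisymm hcard hle
    have hne : Nonempty W := Fintype.card_pos_iff.mp (by omega)
    obtain ⟨v⟩ := hne
    have hcW' : Fintype.card {w : W // w ≠ v} = m := by
      have h1 : Fintype.card {w : W // w = v} = 1 := Fintype.card_subtype_eq v
      have h2 := Fintype.card_subtype_compl (fun w : W => w = v)
      simp only [h1] at h2
      simpa [h2, hcW] using h2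
    obtain ⟨a, b, f', h', hf', hh', hab⟩ :=
      IH {w : W // w ≠ v} (H.comap (Subtype.val)) (le_of_eq hcW')
    rw [hcW'] at hab
    set NF : Finset {w : W // w ≠ v} := univ.filter (fun u => H.Adj v ↑u) with hNF
    set NH : Finset {w : W // w ≠ v} := univ.filter (fun u => ¬ H.Adj v ↑u) with hNHdef
    have hsum : NF.card + NH.card = m := by
      rw [hNF, hNHdef, Finset.card_filter_add_card_filter_not]
      simp [hcW']
    by_cases hab2 : a + b ≤ m
    · -- fresh colors on both sides
      refine ⟨a + 1, b + 1,
        (fun w => if hw : w = v then Fin.last a else (f' ⟨w, hw⟩).castSucc),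
        (fun w => if hw : w = v then Fin.last b else (h' ⟨w, hw⟩).castSucc),
        ?_, ?_, by omega⟩
      · intro u w huw
        by_cases hu : u = v <;> by_cases hw : w = v
        · exact absurd (hu ▸ hw ▸ huw) (H.irrefl)
        · simp only [dif_pos hu, dif_neg hw]
          exact (Fin.castSucc_lt_last _).ne'
        · simp only [dif_neg hu, dif_pos hw]
          exact (Fin.castSucc_lt_last _).ne
        · simp only [dif_neg hu, dif_neg hw]
          intro hEq
          exact hf' ⟨u, hu⟩ ⟨w, hw⟩ huw (Fin.castSucc_injective _ hEq)
      · intro u w hneq hnadj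
        by_cases hu : u = v <;> by_cases hw : w = v
        · exact absurd (hu.trans hw.symm) hneq
        · simp only [dif_pos hu, dif_neg hw]
          exact (Fin.castSucc_lt_last _).ne'
        · simp only [dif_neg hu, dif_pos hw]
          exact (Fin.castSucc_lt_last _).ne
        · simp only [dif_neg hu, dif_neg hw]
          intro hEq
          refine hh' ⟨u, hu⟩ ⟨w, hw⟩ ?_ hnadj (Fin.castSucc_injective _ hEq)
          exact fun h => hneq (congrArg Subtype.val h)
    · -- reuse a color on one side
      have hcase : NF.card < a ∨ NH.card < b := by omega
      rcases hcase with hNFa | hNHb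
      · -- unused color for v on the H side
        have hused : (NF.image f').card < a := lt_of_le_of_lt Finset.card_image_le hNFa
        have hcompl : ((NF.image f')ᶜ : Finset (Fin a)).Nonempty := by
          rw [← Finset.card_pos, Finset.card_compl]
          simp only [Fintype.card_fin]
          omega
        obtain ⟨c, hc⟩ := hcompl
        rw [Finset.mem_compl] at hc
        refine ⟨a, b + 1,
          (fun w => if hw : w = v then c else f' ⟨w, hw⟩),
          (fun w => if hw : w = v then Fin.last b else (h' ⟨w, hw⟩).castSucc),
          ?_, ?_, by omega⟩
        · intro u w huw
          by_cases hu : u = v <;> by_cases hw : w = v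
          · exact absurd (hu ▸ hw ▸ huw) (H.irrefl)
          · simp only [dif_pos hu, dif_neg hw]
            intro hEq
            apply hc
            rw [hEq]
            exact Finset.mem_image_of_mem f'
              (by simp [hNF, Finset.mem_filter]; exact hu ▸ huw)
          · simp only [dif_neg hu, dif_pos hw]
            intro hEq
            apply hc
            rw [← hEq]
            exact Finset.mem_image_of_mem f'
              (by simp [hNF, Finset.mem_filter]; exact hw ▸ huw.symm)
          · simp only [dif_neg hu, dif_neg hw]
            exact hf' ⟨u, hu⟩ ⟨w, hw⟩ huw
        · intro u w hneq hnadj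
          by_cases hu : u = v <;> by_cases hw : w = v
          · exact absurd (hu.trans hw.symm) hneq
          · simp only [dif_pos hu, dif_neg hw]
            exact (Fin.castSucc_lt_last _).ne'
          · simp only [dif_neg hu, dif_pos hw]
            exact (Fin.castSucc_lt_last _).ne
          · simp only [dif_neg hu, dif_neg hw]
            intro hEq
            refine hh' ⟨u, hu⟩ ⟨w, hw⟩ ?_ hnadj (Fin.castSucc_injective _ hEq)
            exact fun h => hneq (congrArg Subtype.val h)
      · -- unused color for v on the complement side
        have hused : (NH.image h').card < b := lt_of_le_of_lt Finset.card_image_le hNHb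
        have hcompl : ((NH.image h')ᶜ : Finset (Fin b)).Nonempty := by
          rw [← Finset.card_pos, Finset.card_compl]
          simp only [Fintype.card_fin]
          omega
        obtain ⟨c, hc⟩ := hcompl
        rw [Finset.mem_compl] at hc
        refine ⟨a + 1, b,
          (fun w => if hw : w = v then Fin.last a else (f' ⟨w, hw⟩).castSucc),
          (fun w => if hw : w = v then c else h' ⟨w, hw⟩),
          ?_, ?_, by omega⟩
        · intro u w huw
          by_cases hu : u = v <;> by_cases hw : w = v
          · exact absurd (hu ▸ hw ▸ huw) (H.irrefl)
          · simp only [dif_pos hu, dif_neg hw]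
            exact (Fin.castSucc_lt_last _).ne'
          · simp only [dif_neg hu, dif_pos hw]
            exact (Fin.castSucc_lt_last _).ne
          · simp only [dif_neg hu, dif_neg hw]
            intro hEq
            exact hf' ⟨u, hu⟩ ⟨w, hw⟩ huw (Fin.castSucc_injective _ hEq)
        · intro u w hneq hnadj
          by_cases hu : u = v <;> by_cases hw : w = v
          · exact absurd (hu.trans hw.symm) hneq
          · simp only [dif_pos hu, dif_neg hw]
            intro hEq
            apply hc
            rw [hEq]
            refine Finset.mem_image_of_mem h' ?_
            simp [hNHdef, Finset.mem_filter]
            exact hu ▸ hnadj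
          · simp only [dif_neg hu, dif_pos hw]
            intro hEq
            apply hc
            rw [← hEq]
            refine Finset.mem_image_of_mem h' ?_
            simp [hNHdef, Finset.mem_filter]
            intro hadj
            exact hnadj (hw ▸ hadj.symm)
          · simp only [dif_neg hu, dif_neg hw]
            intro hEq
            exact hh' ⟨u, hu⟩ ⟨w, hw⟩
              (fun h => hneq (congrArg Subtype.val h)) hnadj hEq

-- glue lemma, for a fixed side
theorem glue (G : SimpleGraph V) (Γ : Subgroup (Equiv.Perm V))
    {d : ℕ} (g : V → Fin d) (hgdist : IsGammaDistinguishing Γ g)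
    (a : Fin d → ℕ) (f : ∀ j : Fin d, {w : V // g w = j} → Fin (a j))
    (hf : ∀ (j : Fin d) (u v : {w : V // g w = j}), G.Adj ↑u ↑v → f j u ≠ f j v) :
    distChromNumGamma G Γ ≤ ∑ j, a j := by
  classical
  apply Nat.sInf_le
  have hA : Fintype.card (Σ j : Fin d, Fin (a j)) = ∑ j, a j := by
    simp [Fintype.card_sigma]
  let e : (Σ j : Fin d, Fin (a j)) ≃ Fin (∑ j, a j) :=
    (Fintype.equivFin _).trans (finCongr (by simp [Fintype.card_sigma]))
  let F : V → Σ j : Fin d, Fin (a j) := fun v => ⟨g v, f (g v) ⟨v, rfl⟩⟩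
  have key : ∀ (w : V) (j : Fin d) (hv : g w = j), F w = ⟨j, f j ⟨w, hv⟩⟩ := by
    intro w j hv; subst hv; rfl
  refine ⟨fun v => e (F v), ?_, ?_⟩
  · intro u w hadj hEq
    have hF : F u = F w := e.injective hEq
    have h1 : g u = g w := congrArg Sigma.fst hF
    rw [key u (g u) rfl, key w (g u) h1.symm] at hF
    have h2 : f (g u) ⟨u, rfl⟩ = f (g u) ⟨w, h1.symm⟩ := by
      simpa using hF
    exact hf (g u) ⟨u, rfl⟩ ⟨w, h1.symm⟩ hadj h2
  · intro φ hφ hfix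
    apply hgdist φ hφ
    intro v
    have hF : F (φ v) = F v := e.injective (hfix v)
    exact congrArg Sigma.fst hF


/-- If `Γ` is a subgroup of `Aut(G)`, then
`χ_D^Γ(G) + χ_D^Γ(Ḡ) ≤ n + D^Γ(G)`. -/
theorem stmt4 (G : SimpleGraph V) (Γ : Subgroup (Equiv.Perm V))
    (hΓ : ∀ φ ∈ Γ, ∀ u v : V, G.Adj (φ u) (φ v) ↔ G.Adj u v) :
    distChromNumGamma G Γ + distChromNumGamma Gᶜ Γ ≤ Fintype.card V + distNumGamma Γ := by
  classical
  have hne : {r : ℕ | ∃ f : V → Fin r, IsGammaDistinguishing Γ f}.Nonempty := by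
    refine ⟨Fintype.card V, Fintype.equivFin V, ?_⟩
    intro φ _ hfix
    exact Equiv.ext fun v => (Fintype.equivFin V).injective (hfix v)
  set d := distNumGamma (V := V) Γ with hd
  obtain ⟨g, hgdist⟩ : ∃ f : V → Fin d, IsGammaDistinguishing Γ f :=
    Nat.sInf_mem hne
  have hNG : ∀ j : Fin d, ∃ (a b : ℕ) (f : {w : V // g w = j} → Fin a)
      (h : {w : V // g w = j} → Fin b),
      (∀ u v, (G.comap (Subtype.val : {w : V // g w = j} → V)).Adj u v → f u ≠ f v) ∧
      (∀ u v : {w : V // g w = j}, u ≠ v →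
        ¬(G.comap (Subtype.val : {w : V // g w = j} → V)).Adj u v → h u ≠ h v) ∧
      a + b ≤ Fintype.card {w : V // g w = j} + 1 := by
    intro j
    exact myNG (Fintype.card V) {w : V // g w = j} (G.comap Subtype.val) (Fintype.card_subtype_le _)
  choose a b f h hf hh hab using hNG
  have hG : distChromNumGamma G Γ ≤ ∑ j, a j := by
    refine glue G Γ g hgdist a f ?_
    intro j u v hadj
    exact hf j u v hadj
  have hGc : distChromNumGamma Gᶜ Γ ≤ ∑ j, b j := by
    refine glue Gᶜ Γ g hgdist b h ?_
    intro j u v hadj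
    rw [SimpleGraph.compl_adj] at hadj
    refine hh j u v (fun hEq => hadj.1 (congrArg Subtype.val hEq)) ?_
    simpa using hadj.2
  have hcardsum : ∑ j : Fin d, Fintype.card {w : V // g w = j} = Fintype.card V := by
    rw [← Fintype.card_sigma]
    exact Fintype.card_congr (Equiv.sigmaFiberEquiv g)
  have hsum : ∑ j, a j + ∑ j, b j ≤ Fintype.card V + d := by
    calc ∑ j, a j + ∑ j, b j = ∑ j, (a j + b j) := (Finset.sum_add_distrib).symm
      _ ≤ ∑ j : Fin d, (Fintype.card {w : V // g w = j} + 1) :=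
          Finset.sum_le_sum (fun j _ => hab j)
      _ = Fintype.card V + d := by
          rw [Finset.sum_add_distrib, hcardsum]
          simp
  omega
end

section
/- For every finite simple graph G with n = |V(G)|, the distinguishing chromatic numbers satisfy 2·√n ≤ χ_D(G) + χ_D(Ḡ). -/
open SimpleGraph

variable {V : Type*} [Fintype V] [DecidableEq V]

/-- `2·√n ≤ χ_D(G) + χ_D(Ḡ)`. -/
theorem stmt5 (G : SimpleGraph V) :
    2 * Real.sqrt (Fintype.card V) ≤ (distChromNum G : ℝ) + (distChromNum Gᶜ : ℝ) := by
  have hne : ∀ H : SimpleGraph V,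
      {r : ℕ | ∃ f : V → Fin r, IsProperColoring H f ∧ IsDistinguishing H f}.Nonempty := by
    intro H
    refine ⟨Fintype.card V, Fintype.equivFin V, ?_, ?_⟩
    · intro u v h hf
      exact H.ne_of_adj h ((Fintype.equivFin V).injective hf)
    · intro φ h v
      exact (Fintype.equivFin V).injective (h v)
  obtain ⟨f, hf, -⟩ := Nat.sInf_mem (hne G)
  obtain ⟨g, hg, -⟩ := Nat.sInf_mem (hne Gᶜ)
  set a := distChromNum G with ha
  set b := distChromNum Gᶜ with hb
  have hinj : Function.Injective (fun v => (f v, g v) : V → Fin a × Fin b) := by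
    intro u v huv
    by_contra hne'
    have h1 : f u = f v := congrArg Prod.fst huv
    have h2 : g u = g v := congrArg Prod.snd huv
    by_cases hadj : G.Adj u v
    · exact hf u v hadj h1
    · exact hg u v ((compl_adj G u v).mpr ⟨hne', hadj⟩) h2
  have hcard : Fintype.card V ≤ a * b := by
    have := Fintype.card_le_of_injective _ hinj
    simpa using this
  have hcardR : (Fintype.card V : ℝ) ≤ (a : ℝ) * b := by exact_mod_cast hcard
  have h1 : Real.sqrt (Fintype.card V) ≤ Real.sqrt ((a : ℝ) * b) :=
    Real.sqrt_le_sqrt hcardR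
  have h2 : 2 * Real.sqrt ((a : ℝ) * b) ≤ (a : ℝ) + b := by
    have hab : (0 : ℝ) ≤ (a : ℝ) * b := by positivity
    nlinarith [Real.sq_sqrt hab, Real.sqrt_nonneg ((a : ℝ) * b),
      sq_nonneg ((a : ℝ) - b), sq_nonneg ((a : ℝ) + b - 2 * Real.sqrt ((a : ℝ) * b))]
  linarith
end

section
/- Let G be an NGD-graph and fix a distinguishing coloring of G using D(G) colors, with color classes V_1,…,V_{D(G)}. Then for each color class V_i, the induced subgraph G[V_i] is an NG-graph, i.e., χ(G[V_i]) + χ(Ḡ[V_i]) = |V_i| + 1. -/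
open SimpleGraph

variable {V : Type*} [Fintype V] [DecidableEq V]

section AuxNGD

lemma aux_induce_compl {W : Type*} (H : SimpleGraph W) (s : Set W) :
    (H.induce s)ᶜ = Hᶜ.induce s := by
  ext a b
  simp only [compl_adj, comap_adj, Function.Embedding.coe_subtype, ne_eq, Subtype.ext_iff]

lemma aux_chromNat_le_iff {W : Type*} [Fintype W] (H : SimpleGraph W) (m : ℕ) :
    chromNat H ≤ m ↔ H.Colorable m := by
  constructor
  · exact fun h => (H.colorable_chromaticNumber_of_fintype).mono h
  · intro h
    simpa [chromNat] using ENat.toNat_le_toNat h.chromaticNumber_le (by simp)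

lemma aux_colorable_extend {W : Type*} [Fintype W] (H : SimpleGraph W) (v : W) {m : ℕ}
    (h : (H.induce {u | u ≠ v}).Colorable m) (hdeg : (H.neighborSet v).ncard < m) :
    H.Colorable m := by
  classical
  obtain ⟨C⟩ := h
  have hm : 0 < m := lt_of_le_of_lt (Nat.zero_le _) hdeg
  let g : W → Fin m := fun u => if h : u = v then ⟨0, hm⟩ else C ⟨u, h⟩
  have hgu : ∀ u (h : u ≠ v), g u = C ⟨u, h⟩ := fun u h => dif_neg h
  let used : Finset (Fin m) := (H.neighborSet v).toFinset.image g
  have hcard : used.card < m := by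
    calc used.card ≤ (H.neighborSet v).toFinset.card := Finset.card_image_le
    _ = (H.neighborSet v).ncard := by rw [Set.ncard_eq_toFinset_card']
    _ < m := hdeg
  have hex : ∃ c : Fin m, c ∉ used := by
    by_contra hc
    push_neg at hc
    have : used = Finset.univ := Finset.eq_univ_iff_forall.mpr hc
    rw [this, Finset.card_univ, Fintype.card_fin] at hcard
    omega
  obtain ⟨c, hc⟩ := hex
  let f : W → Fin m := fun u => if h : u = v then c else C ⟨u, h⟩
  have hfv : f v = c := dif_pos rfl
  have hfu : ∀ u (h : u ≠ v), f u = C ⟨u, h⟩ := fun u h => dif_neg h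
  have hnb : ∀ u, H.Adj v u → f u ∈ used := by
    intro u hu
    have hune : u ≠ v := fun h => (H.ne_of_adj hu) h.symm
    rw [hfu u hune]
    exact Finset.mem_image.mpr ⟨u, by simpa using hu, hgu u hune⟩
  refine ⟨⟨f, ?_⟩⟩
  intro a b hab
  have hne := hab.ne
  by_cases ha : a = v
  · subst ha
    rw [hfv]
    exact fun heq => hc (heq ▸ hnb b hab)
  · by_cases hb : b = v
    · subst hb
      rw [hfv]
      exact fun heq => hc (heq ▸ hnb a hab.symm)
    · rw [hfu a ha, hfu b hb]
      exact C.valid (by simpa using hab)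

lemma aux_colorable_extend_succ {W : Type*} [Fintype W] (H : SimpleGraph W) (v : W) {m : ℕ}
    (h : (H.induce {u | u ≠ v}).Colorable m) : H.Colorable (m + 1) := by
  classical
  obtain ⟨C⟩ := h
  let f : W → Fin (m+1) := fun u => if h : u = v then Fin.last m else (C ⟨u, h⟩).castSucc
  have hfv : f v = Fin.last m := dif_pos rfl
  have hfu : ∀ u (h : u ≠ v), f u = (C ⟨u, h⟩).castSucc := fun u h => dif_neg h
  refine ⟨⟨f, ?_⟩⟩
  intro a b hab
  have hne := hab.ne
  by_cases ha : a = v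
  · subst ha
    rw [hfv, hfu b (fun h => hne h.symm)]
    exact fun heq => absurd heq.symm (Fin.castSucc_lt_last _).ne
  · by_cases hb : b = v
    · subst hb
      rw [hfv, hfu a ha]
      exact fun heq => (Fin.castSucc_lt_last _).ne heq
    · rw [hfu a ha, hfu b hb]
      intro heq
      exact C.valid (by simpa using hab) (Fin.castSucc_injective _ heq)

lemma aux_NG_upper : ∀ (n : ℕ) {W : Type u} [Fintype W] (H : SimpleGraph W),
    Fintype.card W = n → chromNat H + chromNat Hᶜ ≤ n + 1 := by
  intro n
  induction n with
  | zero =>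
    intro W _ H hcard
    have : IsEmpty W := Fintype.card_eq_zero_iff.mp hcard
    simp [chromNat, H.chromaticNumber_eq_zero_of_isEmpty, Hᶜ.chromaticNumber_eq_zero_of_isEmpty]
  | succ n IH =>
    intro W _ H hcard
    classical
    obtain ⟨v⟩ : Nonempty W := Fintype.card_pos_iff.mp (by omega)
    set s : Set W := {u | u ≠ v} with hs
    have hcard' : Fintype.card s = n := by
      have h1 : Fintype.card s = Fintype.card {u // ¬ u = v} :=
        Fintype.card_congr (Equiv.subtypeEquivRight (fun u => Iff.rfl))
      rw [h1, Fintype.card_subtype_compl, Fintype.card_subtype_eq, hcard]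
      omega
    set a := chromNat (H.induce s) with hA
    set b := chromNat (Hᶜ.induce s) with hB
    have hab : a + b ≤ n + 1 := by
      have := IH (H.induce s) hcard'
      rwa [aux_induce_compl] at this
    have hCa : (H.induce s).Colorable a := (H.induce s).colorable_chromaticNumber_of_fintype
    have hCb : (Hᶜ.induce s).Colorable b := (Hᶜ.induce s).colorable_chromaticNumber_of_fintype
    have hdegsum : (H.neighborSet v).ncard + (Hᶜ.neighborSet v).ncard ≤ n := by
      have hdisj : Disjoint (H.neighborSet v) (Hᶜ.neighborSet v) := by
        rw [Set.disjoint_left]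
        intro u hu hu'
        have hu2 : Hᶜ.Adj v u := hu'
        rw [compl_adj] at hu2
        exact hu2.2 hu
      have hunion : H.neighborSet v ∪ Hᶜ.neighborSet v = {v}ᶜ :=
        H.neighborSet_union_compl_neighborSet_eq v
      have : (H.neighborSet v ∪ Hᶜ.neighborSet v).ncard
          = (H.neighborSet v).ncard + (Hᶜ.neighborSet v).ncard :=
        Set.ncard_union_eq hdisj (Set.toFinite _) (Set.toFinite _)
      rw [hunion] at this
      have h2 := Set.ncard_add_ncard_compl ({v} : Set W)
      rw [Set.ncard_singleton, Nat.card_eq_fintype_card, hcard] at h2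
      omega
    have hup1 : chromNat H ≤ a + 1 :=
      (aux_chromNat_le_iff _ _).mpr (aux_colorable_extend_succ H v hCa)
    have hup2 : chromNat Hᶜ ≤ b + 1 :=
      (aux_chromNat_le_iff _ _).mpr (aux_colorable_extend_succ Hᶜ v hCb)
    by_cases h1 : (H.neighborSet v).ncard < a
    · have : chromNat H ≤ a := (aux_chromNat_le_iff _ _).mpr (aux_colorable_extend H v hCa h1)
      omega
    · by_cases h2 : (Hᶜ.neighborSet v).ncard < b
      · have : chromNat Hᶜ ≤ b := (aux_chromNat_le_iff _ _).mpr (aux_colorable_extend Hᶜ v hCb h2)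
        omega
      · omega

lemma aux_isDistinguishing_compl (G : SimpleGraph V) {r : ℕ} (f : V → Fin r)
    (hf : IsDistinguishing G f) : IsDistinguishing Gᶜ f := by
  intro φ hφ v
  refine hf ⟨φ.toEquiv, fun {a b} => ?_⟩ hφ v
  have h1 : Gᶜ.Adj (φ a) (φ b) ↔ Gᶜ.Adj a b := φ.map_adj_iff
  by_cases hab : a = b
  · subst hab; simp
  · have hne : φ a ≠ φ b := fun h => hab (φ.toEquiv.injective h)
    rw [compl_adj, compl_adj] at h1
    simp only [ne_eq, hne, hab, not_false_iff, true_and] at h1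
    tauto

lemma aux_distChromNum_le_sum (G : SimpleGraph V) {r : ℕ} (f : V → Fin r)
    (hf : IsDistinguishing G f) :
    distChromNum G ≤ ∑ i : Fin r, chromNat (G.induce {v | f v = i}) := by
  classical
  set k : Fin r → ℕ := fun i => chromNat (G.induce {v | f v = i}) with hk
  have hcol : ∀ i, ((G.induce {v | f v = i}).Coloring (Fin (k i))) := fun i =>
    ((G.induce {v | f v = i}).colorable_chromaticNumber_of_fintype).some
  have e : (Σ i : Fin r, Fin (k i)) ≃ Fin (∑ i, k i) :=
    Fintype.equivFinOfCardEq (by simp)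
  have pack : ∀ (j : Fin r) (w : V) (hw : f w = j),
      (⟨f w, hcol (f w) ⟨w, rfl⟩⟩ : Σ i, Fin (k i)) = ⟨j, hcol j ⟨w, hw⟩⟩ := by
    intro j w hw; subst hw; rfl
  apply Nat.sInf_le
  refine ⟨fun v => e ⟨f v, hcol (f v) ⟨v, rfl⟩⟩, ?_, ?_⟩
  · intro u v huv heq
    have h' := e.injective heq
    have h1 : f u = f v := congrArg Sigma.fst h'
    rw [pack (f v) u h1] at h'
    have h2 := eq_of_heq (Sigma.mk.inj_iff.mp h').2
    exact (hcol (f v)).valid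
      (show (G.induce {w | f w = f v}).Adj ⟨u, h1⟩ ⟨v, rfl⟩ by simpa using huv) h2
  · intro φ hφ v
    refine hf φ (fun w => ?_) v
    exact congrArg Sigma.fst (e.injective (hφ w))

lemma aux_sum_card_fibers {r : ℕ} (f : V → Fin r) :
    ∑ i : Fin r, Nat.card {v | f v = i} = Fintype.card V := by
  classical
  rw [← Nat.card_eq_fintype_card, ← Nat.card_congr (Equiv.sigmaFiberEquiv f)]
  simp [Nat.card_eq_fintype_card, Fintype.card_subtype]

end AuxNGD

/-- If `G` is an NGD-graph with a distinguishing coloring using `D(G)` colors,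
then each color class induces an NG-graph. -/
theorem stmt7 (G : SimpleGraph V) (hNGD : IsNGD G)
    (f : V → Fin (distNum G)) (hf : IsDistinguishing G f) (i : Fin (distNum G)) :
    chromNat (G.induce {v | f v = i}) + chromNat (Gᶜ.induce {v | f v = i})
      = Nat.card {v | f v = i} + 1 := by
  classical
  have h3 : ∀ j : Fin (distNum G),
      chromNat (G.induce {v | f v = j}) + chromNat (Gᶜ.induce {v | f v = j})
        ≤ Nat.card {v | f v = j} + 1 := by
    intro j
    have := aux_NG_upper (Fintype.card {v | f v = j}) (G.induce {v | f v = j}) rfl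
    rw [aux_induce_compl] at this
    simpa [Nat.card_eq_fintype_card] using this
  have h1 : distChromNum G ≤ ∑ j : Fin (distNum G), chromNat (G.induce {v | f v = j}) :=
    aux_distChromNum_le_sum G f hf
  have h2 : distChromNum Gᶜ ≤ ∑ j : Fin (distNum G), chromNat (Gᶜ.induce {v | f v = j}) :=
    aux_distChromNum_le_sum Gᶜ f (aux_isDistinguishing_compl G f hf)
  have h4 : ∑ j : Fin (distNum G), Nat.card {v | f v = j} = Fintype.card V :=
    aux_sum_card_fibers f
  have hNGD' : distChromNum G + distChromNum Gᶜ = Fintype.card V + distNum G := hNGD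
  have h6 : ∑ j : Fin (distNum G), (Nat.card {v | f v = j} + 1)
      = Fintype.card V + distNum G := by
    rw [Finset.sum_add_distrib, h4]
    simp
  have h7 : ∑ j : Fin (distNum G),
        (chromNat (G.induce {v | f v = j}) + chromNat (Gᶜ.induce {v | f v = j}))
      = ∑ j : Fin (distNum G), chromNat (G.induce {v | f v = j})
        + ∑ j : Fin (distNum G), chromNat (Gᶜ.induce {v | f v = j}) :=
    Finset.sum_add_distrib
  have h5 : ∑ j : Fin (distNum G), (Nat.card {v | f v = j} + 1)
      ≤ ∑ j : Fin (distNum G),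
          (chromNat (G.induce {v | f v = j}) + chromNat (Gᶜ.induce {v | f v = j})) := by
    omega
  have heq := (Finset.sum_eq_sum_iff_of_le (fun j _ => h3 j)).mp
    (le_antisymm (Finset.sum_le_sum (fun j _ => h3 j)) h5)
  exact heq i (Finset.mem_univ i)
end

section
/- Let H be an NG-graph and x a vertex of H with deg_H(x) > χ(H) − 1. Then deg_{H̄}(x) < χ(H̄) − 1; moreover x is color-critical in H but not in H̄, i.e., χ(H − x) = χ(H) − 1 and χ(H̄ − x) = χ(H̄). -/
open SimpleGraph

variable {V : Type*} [Fintype V] [DecidableEq V]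

universe u

section helpers
variable {W : Type*} [Fintype W]

lemma colorable_chromNat (G : SimpleGraph W) : G.Colorable (chromNat G) :=
  G.colorable_chromaticNumber_of_fintype

lemma chromNat_le_iff (G : SimpleGraph W) {n : ℕ} : chromNat G ≤ n ↔ G.Colorable n := by
  constructor
  · intro h; exact (colorable_chromNat G).mono h
  · intro h; exact ENat.toNat_le_of_le_coe h.chromaticNumber_le

lemma chromNat_pos (G : SimpleGraph W) [Nonempty W] : 1 ≤ chromNat G := by
  by_contra h
  have h0 : chromNat G ≤ 0 := by omega
  have := ((chromNat_le_iff G).mp h0)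
  exact (G.isEmpty_of_colorable_zero this).elim (Classical.arbitrary W)

lemma chromNat_induce_le (G : SimpleGraph W) (s : Set W) :
    chromNat (G.induce s) ≤ chromNat G := by
  classical
  exact (chromNat_le_iff _).mpr ((colorable_chromNat G).of_hom (Embedding.induce s).toHom)

omit [Fintype W] in
lemma induce_compl_eq (G : SimpleGraph W) (s : Set W) :
    (G.induce s)ᶜ = Gᶜ.induce s := by
  ext ⟨u, hu⟩ ⟨v, hv⟩
  simp [compl_adj, Subtype.ext_iff]

omit [Fintype W] in
lemma colorable_of_extend (G : SimpleGraph W) (x : W) {m : ℕ}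
    (f : ↥({x}ᶜ : Set W) → Fin m)
    (hf : ∀ u v : ↥({x}ᶜ : Set W), G.Adj u v → f u ≠ f v)
    (c : Fin m) (hc : ∀ (y : W) (hy : y ∈ ({x}ᶜ : Set W)), G.Adj x y → f ⟨y, hy⟩ ≠ c) :
    G.Colorable m := by
  classical
  refine ⟨SimpleGraph.Coloring.mk
    (fun v => if h : v ∈ ({x}ᶜ : Set W) then f ⟨v, h⟩ else c) ?_⟩
  intro u v huv
  have hux : u ∉ ({x}ᶜ : Set W) → u = x := by simp
  have hvx : v ∉ ({x}ᶜ : Set W) → v = x := by simp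
  by_cases hu : u ∈ ({x}ᶜ : Set W) <;> by_cases hv : v ∈ ({x}ᶜ : Set W)
  · simpa [hu, hv] using hf ⟨u, hu⟩ ⟨v, hv⟩ huv
  · have := hvx hv; subst this
    simpa [hu, hv] using hc u hu huv.symm
  · have := hux hu; subst this
    simpa [hu, hv] using (hc v hv huv).symm
  · have h1 := hux hu; have h2 := hvx hv
    rw [h1, h2] at huv; exact (G.irrefl huv).elim

lemma chromNat_le_succ_erase (G : SimpleGraph W) (x : W) :
    chromNat G ≤ chromNat (G.induce ({x}ᶜ : Set W)) + 1 := by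
  classical
  set m := chromNat (G.induce ({x}ᶜ : Set W))
  obtain ⟨C⟩ := colorable_chromNat (G.induce ({x}ᶜ : Set W))
  rw [chromNat_le_iff]
  refine colorable_of_extend G x (fun v => (C v).castSucc) ?_ (Fin.last m) ?_
  · intro u v huv h
    exact C.valid huv (Fin.castSucc_injective m h)
  · intro y hy _
    exact (Fin.castSucc_lt_last _).ne

lemma chromNat_le_max_deg (G : SimpleGraph W) [DecidableRel G.Adj] (x : W) :
    chromNat G ≤ max (chromNat (G.induce ({x}ᶜ : Set W))) (G.degree x + 1) := by
  classical
  set m := max (chromNat (G.induce ({x}ᶜ : Set W))) (G.degree x + 1) with hm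
  have hdm : G.degree x < m := lt_of_lt_of_le (Nat.lt_succ_self _) (le_max_right _ _)
  obtain ⟨C⟩ := (colorable_chromNat (G.induce ({x}ᶜ : Set W))).mono
    (le_max_left _ (G.degree x + 1))
  have hm0 : 0 < m := Nat.lt_of_lt_of_le (Nat.zero_lt_succ _) (le_max_right _ _)
  set g : W → Fin m := fun v => if h : v ∈ ({x}ᶜ : Set W) then C ⟨v, h⟩ else ⟨0, hm0⟩ with hg
  set S : Finset (Fin m) := (G.neighborFinset x).image g with hS
  have hcard : S.card < m := by
    calc S.card ≤ (G.neighborFinset x).card := Finset.card_image_le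
    _ = G.degree x := rfl
    _ < m := hdm
  have : ∃ c : Fin m, c ∉ S := by
    by_contra h
    push_neg at h
    have hsub : (Finset.univ : Finset (Fin m)) ⊆ S := fun c _ => h c
    have := Finset.card_le_card hsub
    simp at this
    omega
  obtain ⟨c, hc⟩ := this
  rw [chromNat_le_iff]
  refine colorable_of_extend G x (fun v => C v) ?_ c ?_
  · intro u v huv h; exact C.valid huv h
  · intro y hy hadj h
    apply hc
    rw [hS]
    refine Finset.mem_image.mpr ⟨y, ?_, ?_⟩
    · rwa [mem_neighborFinset]
    · rw [hg]; simp only [hy, dif_pos]; exact h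

end helpers

lemma NG_ub : ∀ (n : ℕ) (W : Type u) [Fintype W] (G : SimpleGraph W), Fintype.card W = n →
    chromNat G + chromNat Gᶜ ≤ n + 1 := by
  intro n
  induction n using Nat.strong_induction_on with
  | _ n ih =>
    intro W _ G hcard
    classical
    rcases isEmpty_or_nonempty W with hW | hW
    · have h1 : chromNat G ≤ 0 := (chromNat_le_iff G).mpr (Colorable.of_isEmpty (G := G) 0)
      have h2 : chromNat Gᶜ ≤ 0 := (chromNat_le_iff Gᶜ).mpr (Colorable.of_isEmpty (G := Gᶜ) 0)
      omega
    · obtain ⟨x⟩ := hW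
      have hn1 : 1 ≤ n := by
        rw [← hcard]; exact @Fintype.card_pos W _ ⟨x⟩
      have hcard' : Fintype.card ↥({x}ᶜ : Set W) = n - 1 := by
        rw [Fintype.card_compl_set, hcard]; simp
      have hIH := ih (n-1) (by omega) ↥({x}ᶜ : Set W) (G.induce _) hcard'
      rw [induce_compl_eq] at hIH
      have hA := chromNat_le_succ_erase G x
      have hA' := chromNat_le_succ_erase Gᶜ x
      by_cases h1 : chromNat G ≤ chromNat (G.induce ({x}ᶜ : Set W))
      · omega
      by_cases h2 : chromNat Gᶜ ≤ chromNat (Gᶜ.induce ({x}ᶜ : Set W))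
      · omega
      · have hd1 : chromNat G ≤ G.degree x + 1 := by
          rcases le_max_iff.mp (chromNat_le_max_deg G x) with h | h
          · omega
          · exact h
        have hd2 : chromNat Gᶜ ≤ Gᶜ.degree x + 1 := by
          rcases le_max_iff.mp (chromNat_le_max_deg Gᶜ x) with h | h
          · omega
          · exact h
        have hdc : Gᶜ.degree x = Fintype.card W - 1 - G.degree x := degree_compl G x
        have hdeg : G.degree x < Fintype.card W := G.degree_lt_card_verts x
        omega

/-- If `H` is an NG-graph and `deg_H(x) > χ(H) − 1` then `deg_{H̄}(x) < χ(H̄) − 1`;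
moreover `x` is color-critical in `H` but not in `H̄`. -/
theorem stmt9 (H : SimpleGraph V) [DecidableRel H.Adj] (hNG : IsNG H)
    (x : V) (hx : H.degree x > chromNat H - 1) :
    Hᶜ.degree x < chromNat Hᶜ - 1 ∧
      chromNat (H.induce ({x}ᶜ : Set V)) = chromNat H - 1 ∧
      chromNat (Hᶜ.induce ({x}ᶜ : Set V)) = chromNat Hᶜ := by
  classical
  haveI : Nonempty V := ⟨x⟩
  have hn : Nat.card V = Fintype.card V := Nat.card_eq_fintype_card
  have hk1 : 1 ≤ chromNat H := chromNat_pos H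
  have hk1' : 1 ≤ chromNat Hᶜ := chromNat_pos Hᶜ
  have hdeg : H.degree x < Fintype.card V := H.degree_lt_card_verts x
  have hdc : Hᶜ.degree x = Fintype.card V - 1 - H.degree x := degree_compl H x
  unfold IsNG at hNG
  rw [hn] at hNG
  have g1 : Hᶜ.degree x < chromNat Hᶜ - 1 := by omega
  have hcard' : Fintype.card ↥({x}ᶜ : Set V) = Fintype.card V - 1 := by
    rw [Fintype.card_compl_set]; simp
  have hub := NG_ub (Fintype.card V - 1) ↥({x}ᶜ : Set V) (H.induce _) hcard'
  rw [induce_compl_eq] at hub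
  have hA := chromNat_le_succ_erase H x
  have hmono' := chromNat_induce_le Hᶜ ({x}ᶜ : Set V)
  have g3 : chromNat (Hᶜ.induce ({x}ᶜ : Set V)) = chromNat Hᶜ := by
    refine le_antisymm hmono' ?_
    rcases le_max_iff.mp (chromNat_le_max_deg Hᶜ x) with h | h
    · exact h
    · omega
  have g2 : chromNat (H.induce ({x}ᶜ : Set V)) = chromNat H - 1 := by omega
  exact ⟨g1, g2, g3⟩
end

section
/- Let G be an NG-graph with degree-based partition A_G = {v : deg(v) = χ(G) − 1}, B_G = {v : deg(v) > χ(G) − 1}, C_G = {v : deg(v) < χ(G) − 1}. Then C_G is an independent set in G, and there is no edge of G between a vertex of A_G and a vertex of C_G. -/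
open SimpleGraph

variable {V : Type*} [Fintype V] [DecidableEq V]

section Aux

variable {W : Type*}

lemma cn_le {G : SimpleGraph W} {k : ℕ} (h : G.Colorable k) : chromNat G ≤ k :=
  ENat.toNat_le_of_le_coe h.chromaticNumber_le

lemma cn_col [Finite W] (G : SimpleGraph W) : G.Colorable (chromNat G) :=
  G.colorable_chromaticNumber_of_fintype

/-- Restriction of a coloring to a smaller induced subgraph. -/
lemma col_mono (G : SimpleGraph W) {s t : Set W} (hts : t ⊆ s) {k : ℕ}
    (h : (G.induce s).Colorable k) : (G.induce t).Colorable k :=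
  h.of_hom (G.induceHomOfLE hts).toHom

/-- Greedy extension: if `v`'s neighbors within `s` use fewer than `k` colors' worth of
vertices, a `k`-coloring of `s \ {v}` extends to `s`. -/
lemma aux_greedy [Fintype W] (G : SimpleGraph W) (s : Set W) (v : W) (hv : v ∈ s) {k : ℕ}
    (hdeg : {x ∈ s | G.Adj v x}.ncard < k)
    (h : (G.induce (s \ {v})).Colorable k) : (G.induce s).Colorable k := by
  classical
  obtain ⟨c⟩ := h
  set N : Finset W := {x ∈ s | G.Adj v x}.toFinset with hN
  have hNcard : N.card < k := by
    rwa [hN, ← Set.ncard_eq_toFinset_card']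
  have hmemN : ∀ x ∈ N, x ∈ s \ {v} := by
    intro x hx
    rw [hN, Set.mem_toFinset] at hx
    exact ⟨hx.1, fun he => G.irrefl (show G.Adj v v from (Set.mem_singleton_iff.mp he) ▸ hx.2)⟩
  set used : Finset (Fin k) := N.attach.image (fun x => c ⟨x.1, hmemN x.1 x.2⟩) with huse
  obtain ⟨a, ha⟩ : ∃ a : Fin k, a ∉ used := by
    by_contra hc
    push_neg at hc
    have h1 : (Finset.univ : Finset (Fin k)).card ≤ used.card :=
      Finset.card_le_card (fun a _ => hc a)
    have h2 : used.card ≤ N.card := by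
      calc used.card ≤ N.attach.card := Finset.card_image_le
        _ = N.card := Finset.card_attach
    simp only [Finset.card_univ, Fintype.card_fin] at h1
    omega
  refine ⟨SimpleGraph.Coloring.mk
    (fun x => if hx : (x : W) = v then a else c ⟨x, x.2, hx⟩) ?_⟩
  rintro ⟨x, hx⟩ ⟨y, hy⟩ hadj
  have hadj' : G.Adj x y := hadj
  by_cases hxv : x = v
  · have hvy : G.Adj v y := hxv ▸ hadj'
    have hyv : y ≠ v := fun he => G.irrefl (he ▸ hvy)
    simp only [dif_pos hxv, dif_neg hyv]
    intro hcon
    apply ha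
    rw [huse]
    apply Finset.mem_image.mpr
    have hyN : y ∈ N := by
      rw [hN, Set.mem_toFinset]; exact ⟨hy, hvy⟩
    exact ⟨⟨y, hyN⟩, Finset.mem_attach _ _, hcon.symm⟩
  · by_cases hyv : y = v
    · have hvx : G.Adj v x := by
        rw [← hyv]; exact hadj'.symm
      simp only [dif_neg hxv, dif_pos hyv]
      intro hcon
      apply ha
      rw [huse]
      apply Finset.mem_image.mpr
      have hxN : x ∈ N := by
        rw [hN, Set.mem_toFinset]; exact ⟨hx, hvx⟩
      exact ⟨⟨x, hxN⟩, Finset.mem_attach _ _, hcon⟩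
    · simp only [dif_neg hxv, dif_neg hyv]
      have hadj2 : (G.induce (s \ {v})).Adj ⟨x, hx, hxv⟩ ⟨y, hy, hyv⟩ := hadj'
      exact c.valid hadj2

/-- Adding back one vertex with a fresh color. -/
lemma aux_fresh (G : SimpleGraph W) (s : Set W) (v : W) {k : ℕ}
    (h : (G.induce (s \ {v})).Colorable k) : (G.induce s).Colorable (k + 1) := by
  classical
  obtain ⟨c⟩ := h
  refine ⟨SimpleGraph.Coloring.mk
    (fun x => if hx : (x : W) = v then Fin.last k else (c ⟨x, x.2, hx⟩).castSucc) ?_⟩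
  rintro ⟨x, hx⟩ ⟨y, hy⟩ hadj
  have hadj' : G.Adj x y := hadj
  by_cases hxv : x = v
  · have hvy : G.Adj v y := hxv ▸ hadj'
    have hyv : y ≠ v := fun he => G.irrefl (he ▸ hvy)
    simp only [dif_pos hxv, dif_neg hyv]
    exact fun hcon => (Fin.castSucc_lt_last _).ne hcon.symm
  · by_cases hyv : y = v
    · simp only [dif_neg hxv, dif_pos hyv]
      exact (Fin.castSucc_lt_last _).ne
    · simp only [dif_neg hxv, dif_neg hyv]
      intro hcon
      have hadj2 : (G.induce (s \ {v})).Adj ⟨x, hx, hxv⟩ ⟨y, hy, hyv⟩ := hadj'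
      exact c.valid hadj2 (Fin.castSucc_inj.mp hcon)

/-- Adding back two `G`-adjacent vertices to a coloring of the complement,
with one shared fresh color. -/
lemma aux_pair (G : SimpleGraph W) (s : Set W) (u w : W) (hadj : G.Adj u w) {k : ℕ}
    (h : (Gᶜ.induce ((s \ {w}) \ {u})).Colorable k) : (Gᶜ.induce s).Colorable (k + 1) := by
  classical
  obtain ⟨c⟩ := h
  refine ⟨SimpleGraph.Coloring.mk
    (fun x => if hx : (x : W) = u ∨ (x : W) = w then Fin.last k
      else (c ⟨x, ⟨x.2, (not_or.mp hx).2⟩, (not_or.mp hx).1⟩).castSucc) ?_⟩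
  rintro ⟨x, hx⟩ ⟨y, hy⟩ hadj'
  have hxy : Gᶜ.Adj x y := hadj'
  rw [SimpleGraph.compl_adj] at hxy
  by_cases hxc : x = u ∨ x = w
  · by_cases hyc : y = u ∨ y = w
    · exfalso
      rcases hxc with rfl | rfl <;> rcases hyc with rfl | rfl
      · exact hxy.1 rfl
      · exact hxy.2 hadj
      · exact hxy.2 hadj.symm
      · exact hxy.1 rfl
    · simp only [dif_pos hxc, dif_neg hyc]
      exact (Fin.castSucc_lt_last _).ne'
  · by_cases hyc : y = u ∨ y = w
    · simp only [dif_neg hxc, dif_pos hyc]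
      exact (Fin.castSucc_lt_last _).ne
    · simp only [dif_neg hxc, dif_neg hyc]
      intro hcon
      have hxm : x ∈ (s \ {w}) \ {u} := ⟨⟨hx, (not_or.mp hxc).2⟩, (not_or.mp hxc).1⟩
      have hym : y ∈ (s \ {w}) \ {u} := ⟨⟨hy, (not_or.mp hyc).2⟩, (not_or.mp hyc).1⟩
      have hxy2 : Gᶜ.Adj x y := hadj'
      have hadj2 : (Gᶜ.induce ((s \ {w}) \ {u})).Adj ⟨x, hxm⟩ ⟨y, hym⟩ := hxy2
      exact c.valid hadj2 (Fin.castSucc_inj.mp hcon)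

/-- Degrees within `s` in `G` and `Gᶜ` sum to `|s \ {v}|`. -/
lemma aux_degsum [Fintype W] (G : SimpleGraph W) (s : Set W) (v : W) :
    {x ∈ s | G.Adj v x}.ncard + {x ∈ s | Gᶜ.Adj v x}.ncard = (s \ {v}).ncard := by
  classical
  rw [← Set.ncard_union_eq]
  · congr 1
    ext x
    simp only [Set.mem_union, Set.mem_setOf_eq, Set.mem_diff, Set.mem_singleton_iff,
      SimpleGraph.compl_adj]
    constructor
    · rintro (⟨hs, ha⟩ | ⟨hs, hne, _⟩)
      · exact ⟨hs, fun he => G.irrefl (he ▸ ha)⟩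
      · exact ⟨hs, fun he => hne (he ▸ rfl)⟩
    · rintro ⟨hs, hne⟩
      by_cases ha : G.Adj v x
      · exact Or.inl ⟨hs, ha⟩
      · exact Or.inr ⟨hs, fun he => hne he.symm, ha⟩
  · rw [Set.disjoint_left]
    rintro x ⟨_, ha⟩ ⟨_, hc⟩
    exact hc.2 ha

/-- Nordhaus–Gaddum upper bound for induced subgraphs. -/
lemma NGbound [Fintype W] (G : SimpleGraph W) :
    ∀ (n : ℕ) (s : Set W), s.ncard = n →
      chromNat (G.induce s) + chromNat (Gᶜ.induce s) ≤ n + 1 := by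
  intro n
  induction n with
  | zero =>
    intro s hs
    have hse : s = ∅ := (Set.ncard_eq_zero (Set.toFinite s)).mp hs
    subst hse
    have h1 : (G.induce (∅ : Set W)).Colorable 0 := SimpleGraph.Colorable.of_isEmpty 0
    have h2 : (Gᶜ.induce (∅ : Set W)).Colorable 0 := SimpleGraph.Colorable.of_isEmpty 0
    have := cn_le h1
    have := cn_le h2
    omega
  | succ n ih =>
    intro s hs
    obtain ⟨v, hv⟩ : s.Nonempty := by
      rw [← Set.ncard_pos (Set.toFinite s)]; omega
    set t : Set W := s \ {v} with ht
    have htcard : t.ncard = n := by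
      rw [ht, Set.ncard_diff_singleton_of_mem hv, hs]
      omega
    set a := chromNat (G.induce t) with hadef
    set b := chromNat (Gᶜ.induce t) with hbdef
    have ihab : a + b ≤ n + 1 := ih t htcard
    set dG := {x ∈ s | G.Adj v x}.ncard with hdG
    set dH := {x ∈ s | Gᶜ.Adj v x}.ncard with hdH
    have hsum : dG + dH = n := by
      have := aux_degsum G s v
      rw [← ht] at this; omega
    have hA1 : chromNat (G.induce s) ≤ a + 1 :=
      cn_le (aux_fresh G s v (cn_col _))
    have hB1 : chromNat (Gᶜ.induce s) ≤ b + 1 :=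
      cn_le (aux_fresh Gᶜ s v (cn_col _))
    have hA2 : chromNat (G.induce s) ≤ max a (dG + 1) :=
      cn_le (aux_greedy G s v hv (lt_of_lt_of_le (Nat.lt_succ_self _) (le_max_right _ _))
        ((cn_col _).mono (le_max_left _ _)))
    have hB2 : chromNat (Gᶜ.induce s) ≤ max b (dH + 1) :=
      cn_le (aux_greedy Gᶜ s v hv (lt_of_lt_of_le (Nat.lt_succ_self _) (le_max_right _ _))
        ((cn_col _).mono (le_max_left _ _)))
    have hA2' : chromNat (G.induce s) ≤ a ∨ chromNat (G.induce s) ≤ dG + 1 := by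
      rcases max_cases a (dG + 1) with ⟨he, _⟩ | ⟨he, _⟩
      · left; omega
      · right; omega
    have hB2' : chromNat (Gᶜ.induce s) ≤ b ∨ chromNat (Gᶜ.induce s) ≤ dH + 1 := by
      rcases max_cases b (dH + 1) with ⟨he, _⟩ | ⟨he, _⟩
      · left; omega
      · right; omega
    omega

end Aux

/-- Core lemma: in an NG-graph there is no edge `uw` with
`deg u ≤ χ - 1` and `deg w ≤ χ - 2`. -/
lemma ng_core (G : SimpleGraph V) [DecidableRel G.Adj] (hNG : IsNG G) {u w : V}
    (hadj : G.Adj u w) (hu : G.degree u + 1 ≤ chromNat G)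
    (hw : G.degree w + 2 ≤ chromNat G) : False := by
  classical
  set χ := chromNat G with hχ
  set n := Fintype.card V with hn
  have hNG' : χ + chromNat Gᶜ = n + 1 := by
    have := hNG
    rwa [IsNG, Nat.card_eq_fintype_card] at this
  have hne : u ≠ w := G.ne_of_adj hadj
  set s0 : Set V := Set.univ with hs0
  set s1 : Set V := s0 \ {w} with hs1
  set s2 : Set V := s1 \ {u} with hs2
  have hus1 : u ∈ s1 := ⟨Set.mem_univ u, by simpa using hne⟩
  -- cardinalities
  have hn2 : 2 ≤ n := Fintype.one_lt_card_iff_nontrivial.mpr ⟨⟨u, w, hne⟩⟩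
  have hc1 : s1.ncard = n - 1 := by
    rw [hs1, Set.ncard_diff_singleton_of_mem (Set.mem_univ w),
      Set.ncard_univ, Nat.card_eq_fintype_card]
  have hc2 : s2.ncard = n - 2 := by
    rw [hs2, Set.ncard_diff_singleton_of_mem hus1, hc1]
    omega
  set k := chromNat (G.induce s2) with hk
  set kb := chromNat (Gᶜ.induce s2) with hkb
  -- NG bound on s2
  have hbound : k + kb ≤ (n - 2) + 1 := NGbound G (n - 2) s2 hc2
  -- χ(Gᶜ) ≤ kb + 1
  have hcompl : chromNat Gᶜ ≤ kb + 1 := by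
    have h1 : (Gᶜ.induce s0).Colorable (kb + 1) := aux_pair G s0 u w hadj (cn_col _)
    have h2 : Gᶜ.Colorable (kb + 1) :=
      h1.of_hom (Gᶜ.induceUnivIso.symm.toEmbedding).toHom
    exact cn_le h2
  -- χ(G) ≤ max k (χ - 1)
  have hχk : χ ≤ k := by
    set K := max k (χ - 1) with hK
    have hK1 : χ - 1 ≤ K := le_max_right _ _
    have hc2col : (G.induce s2).Colorable K := (cn_col _).mono (le_max_left _ _)
    -- degree of u within s1
    have hd1 : {x ∈ s1 | G.Adj u x}.ncard ≤ G.degree u - 1 := by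
      have hsub : {x ∈ s1 | G.Adj u x} ⊆ (G.neighborSet u) \ {w} := by
        rintro x ⟨hxs, hxa⟩
        exact ⟨hxa, hxs.2⟩
      have hle := Set.ncard_le_ncard hsub (Set.toFinite _)
      have hcard : ((G.neighborSet u) \ {w}).ncard = G.degree u - 1 := by
        rw [Set.ncard_diff_singleton_of_mem (by exact hadj)]
        congr 1
        rw [← SimpleGraph.card_neighborSet_eq_degree, Set.ncard_eq_toFinset_card',
          Set.toFinset_card]
      omega
    have hstep1 : (G.induce s1).Colorable K := by
      apply aux_greedy G s1 u hus1 _ hc2col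
      omega
    have hd2 : {x ∈ s0 | G.Adj w x}.ncard = G.degree w := by
      have : {x ∈ s0 | G.Adj w x} = G.neighborSet w := by
        ext x; simp [hs0, SimpleGraph.mem_neighborSet]
      rw [this, ← SimpleGraph.card_neighborSet_eq_degree, Set.ncard_eq_toFinset_card',
        Set.toFinset_card]
    have hstep2 : (G.induce s0).Colorable K := by
      apply aux_greedy G s0 w (Set.mem_univ w) _ hstep1
      omega
    have hGcol : G.Colorable K := hstep2.of_hom (G.induceUnivIso.symm.toEmbedding).toHom
    have hχK : χ ≤ K := cn_le hGcol
    rcases max_cases k (χ - 1) with ⟨he, _⟩ | ⟨he, _⟩ <;> omega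
  omega

/-- In an NG-graph, `C_G` is independent and there are no edges between `A_G`
and `C_G`. -/
theorem stmt11 (G : SimpleGraph V) [DecidableRel G.Adj] (hNG : IsNG G) :
    IsIndepSet' G (setC G) ∧ ∀ u ∈ setA G, ∀ w ∈ setC G, ¬ G.Adj u w := by
  constructor
  · intro u hu w hw hadj
    rw [setC, Set.mem_setOf_eq] at hu hw
    exact ng_core G hNG hadj (by omega) (by omega)
  · intro u hu w hw hadj
    rw [setA, Set.mem_setOf_eq] at hu
    rw [setC, Set.mem_setOf_eq] at hw
    exact ng_core G hNG hadj (by omega) (by omega)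
end

section
/- Let G be an NG-graph with degree-based partition A_G = {v : deg(v) = χ(G) − 1}, B_G = {v : deg(v) > χ(G) − 1}, C_G = {v : deg(v) < χ(G) − 1}, and suppose A_G ≠ ∅. Then the induced subgraph H = G[A_G] is an NG-graph, and χ(G) = χ(H) + |B_G|. -/
open SimpleGraph

variable {V : Type*} [Fintype V] [DecidableEq V]

/-! ### Auxiliary lemmas -/

section Aux

universe u

/-- `f` is a proper coloring of `G` when restricted to the set `T`. -/
def MyProperOn {W : Type u} (G : SimpleGraph W) {m : ℕ} (T : Set W) (f : W → Fin m) : Prop :=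
  ∀ u ∈ T, ∀ v ∈ T, G.Adj u v → f u ≠ f v

lemma myColorable_of_properOn {W : Type u} (G : SimpleGraph W) {m : ℕ} {f : W → Fin m}
    (hf : MyProperOn G Set.univ f) : G.Colorable m :=
  ⟨SimpleGraph.Coloring.mk f fun h => hf _ trivial _ trivial h⟩

lemma myChromNat_le_iff {W : Type u} [Finite W] (G : SimpleGraph W) {m : ℕ} :
    chromNat G ≤ m ↔ G.Colorable m := by
  constructor
  · intro h
    exact (G.colorable_chromaticNumber_of_fintype).mono h
  · intro h
    have : G.chromaticNumber.toNat ≤ ((m : ℕ∞)).toNat :=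
      ENat.toNat_le_toNat h.chromaticNumber_le (by simp)
    simpa [chromNat] using this

lemma myInduce_compl {W : Type u} (G : SimpleGraph W) (s : Set W) :
    Gᶜ.induce s = (G.induce s)ᶜ := by
  ext u v
  simp only [comap_adj, Function.Embedding.coe_subtype, compl_adj, ne_eq, Subtype.ext_iff]

lemma myGreedy {W : Type u} [Fintype W] [DecidableEq W] (G : SimpleGraph W)
    [DecidableRel G.Adj] {m : ℕ} (T : Set W) (S : Finset W) :
    ∀ f : W → Fin m, (∀ c ∈ S, G.degree c < m) → MyProperOn G T f →
      ∃ g : W → Fin m, MyProperOn G (T ∪ ↑S) g := by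
  induction S using Finset.induction with
  | empty => intro f _ hf; exact ⟨f, by simpa using hf⟩
  | @insert c S' hc ih =>
    intro f hd hf
    obtain ⟨g, hg⟩ := ih f (fun x hx => hd x (Finset.mem_insert_of_mem hx)) hf
    have hdc : G.degree c < m := hd c (Finset.mem_insert_self c S')
    have hcard : ((G.neighborFinset c).image g).card < m :=
      lt_of_le_of_lt Finset.card_image_le hdc
    have hne : (((G.neighborFinset c).image g)ᶜ : Finset (Fin m)).Nonempty := by
      rw [← Finset.card_pos, Finset.card_compl, Fintype.card_fin]
      omega
    obtain ⟨k, hk⟩ := hne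
    rw [Finset.mem_compl] at hk
    refine ⟨Function.update g c k, ?_⟩
    intro u hu v hv hadj
    have hne' : u ≠ v := G.ne_of_adj hadj
    have hmem : ∀ x, x ∈ T ∪ ↑(insert c S') → x ≠ c → x ∈ T ∪ ↑S' := by
      intro x hx hxc
      rcases hx with h | h
      · exact Or.inl h
      · rw [Finset.mem_coe, Finset.mem_insert] at h
        exact Or.inr (Finset.mem_coe.mpr (h.resolve_left hxc))
    by_cases huc : u = c <;> by_cases hvc : v = c
    · exact absurd (huc.trans hvc.symm) hne'
    · subst huc
      rw [Function.update_self, Function.update_of_ne hvc]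
      intro heq
      exact hk (heq ▸ Finset.mem_image_of_mem g ((G.mem_neighborFinset _ _).mpr hadj))
    · subst hvc
      rw [Function.update_self, Function.update_of_ne huc]
      intro heq
      exact hk (heq ▸ Finset.mem_image_of_mem g ((G.mem_neighborFinset _ _).mpr hadj.symm))
    · rw [Function.update_of_ne huc, Function.update_of_ne hvc]
      exact hg u (hmem u hu huc) v (hmem v hv hvc) hadj

/-- lift a coloring of an induced subgraph to a function proper on `T` -/
lemma myLift {W : Type u} (G : SimpleGraph W) {m : ℕ} (hm : 0 < m) (T : Set W)
    (g : (G.induce T).Coloring (Fin m)) : ∃ f : W → Fin m, MyProperOn G T f := by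
  classical
  refine ⟨fun w => if h : w ∈ T then g ⟨w, h⟩ else ⟨0, hm⟩, ?_⟩
  intro u hu v hv hadj
  simp only [dif_pos hu, dif_pos hv]
  exact g.valid (show (G.induce T).Adj ⟨u, hu⟩ ⟨v, hv⟩ from hadj)

/-- delete one vertex: `χ(G) ≤ χ(G - v) + 1` -/
lemma myDel1 {W : Type u} [Fintype W] [DecidableEq W] (G : SimpleGraph W) (v : W) :
    chromNat G ≤ chromNat (G.induce {v}ᶜ) + 1 := by
  classical
  set m := chromNat (G.induce {v}ᶜ) with hm
  rw [myChromNat_le_iff]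
  have hcol : (G.induce {v}ᶜ).Colorable m := by
    rw [← myChromNat_le_iff]
  obtain ⟨g⟩ := hcol
  refine myColorable_of_properOn G (f := fun w =>
    if h : w ∈ ({v}ᶜ : Set W) then (g ⟨w, h⟩).castSucc else Fin.last m) ?_
  intro u _ w _ hadj
  by_cases hu : u ∈ ({v}ᶜ : Set W) <;> by_cases hw : w ∈ ({v}ᶜ : Set W)
  · simp only [dif_pos hu, dif_pos hw]
    intro heq
    exact g.valid (show (G.induce {v}ᶜ).Adj ⟨u, hu⟩ ⟨w, hw⟩ from hadj)
      (Fin.castSucc_injective _ heq)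
  · simp only [dif_pos hu, dif_neg hw]
    exact Fin.ne_of_lt (Fin.castSucc_lt_last _)
  · simp only [dif_neg hu, dif_pos hw]
    exact (Fin.ne_of_lt (Fin.castSucc_lt_last _)).symm
  · exfalso
    simp only [Set.mem_compl_iff, Set.mem_singleton_iff, not_not] at hu hw
    exact G.ne_of_adj hadj (hu.trans hw.symm)

/-- if `v` has degree `< m` and `G - v` is `m`-colorable then `G` is `m`-colorable -/
lemma myDel2 {W : Type u} [Fintype W] [DecidableEq W] (G : SimpleGraph W)
    [DecidableRel G.Adj] (v : W) {m : ℕ} (hdeg : G.degree v < m)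
    (hcol : (G.induce {v}ᶜ).Colorable m) : G.Colorable m := by
  classical
  obtain ⟨g⟩ := hcol
  obtain ⟨f, hf⟩ := myLift G (Nat.pos_of_ne_zero (by omega)) ({v}ᶜ) g
  obtain ⟨h, hh⟩ := myGreedy G ({v}ᶜ : Set W) {v} f (by simpa using hdeg) hf
  apply myColorable_of_properOn G (f := h)
  have : ({v}ᶜ : Set W) ∪ ↑({v} : Finset W) = Set.univ := by
    ext x
    by_cases hx : x = v <;> simp [hx]
  rwa [this] at hh

/-- The Nordhaus–Gaddum upper bound `χ(G) + χ(Ḡ) ≤ n + 1`. -/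
lemma myNGineq : ∀ (n : ℕ) (W : Type u) [Fintype W] [DecidableEq W] (H : SimpleGraph W),
    Fintype.card W = n → chromNat H + chromNat Hᶜ ≤ n + 1 := by
  intro n
  induction n with
  | zero =>
    intro W _ _ H hcard
    have : IsEmpty W := Fintype.card_eq_zero_iff.mp hcard
    simp [chromNat, H.chromaticNumber_eq_zero_of_isEmpty, Hᶜ.chromaticNumber_eq_zero_of_isEmpty]
  | succ n ih =>
    intro W _ _ H hcard
    classical
    have hne : Nonempty W := Fintype.card_pos_iff.mp (by omega)
    obtain ⟨v⟩ := hne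
    have hcard' : Fintype.card ({v}ᶜ : Set W) = n := by
      rw [Fintype.card_compl_set]
      simp [hcard]
    have hIH := ih ({v}ᶜ : Set W) (H.induce {v}ᶜ) hcard'
    rw [← myInduce_compl] at hIH
    set m := chromNat (H.induce {v}ᶜ) with hmdef
    set mc := chromNat (Hᶜ.induce {v}ᶜ) with hmcdef
    have hd1 : chromNat H ≤ m + 1 := myDel1 H v
    have hd2 : chromNat Hᶜ ≤ mc + 1 := myDel1 Hᶜ v
    by_cases h1 : H.degree v < m
    · have : chromNat H ≤ m := by
        rw [myChromNat_le_iff]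
        exact myDel2 H v h1 ((myChromNat_le_iff _).mp le_rfl)
      omega
    · by_cases h2 : Hᶜ.degree v < mc
      · have : chromNat Hᶜ ≤ mc := by
          rw [myChromNat_le_iff]
          exact myDel2 Hᶜ v h2 ((myChromNat_le_iff _).mp le_rfl)
        omega
      · have hs : H.degree v + Hᶜ.degree v = n := by
          have hc := H.degree_compl (v := v)
          have hlt : H.degree v < Fintype.card W := H.degree_lt_card_verts v
          omega
        omega

end Aux

/-- Key upper bound: `χ(G) ≤ χ(G[A]) + |B|`. -/
lemma myU1 (G : SimpleGraph V) [DecidableRel G.Adj] (hχ : 1 ≤ chromNat G) :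
    chromNat G ≤ chromNat (G.induce (setA G)) + (setB G).ncard := by
  classical
  by_contra hcon
  push_neg at hcon
  set χ := chromNat G with hχdef
  set a := chromNat (G.induce (setA G)) with hadef
  set Bf := (setB G).toFinset with hBfdef
  set b := Bf.card with hbdef
  have hb : (setB G).ncard = b := Set.ncard_eq_toFinset_card' _
  set m := χ - 1 with hmdef
  have hab : a + b ≤ m := by omega
  rcases Nat.eq_zero_or_pos m with hm0 | hm0
  · -- degenerate case: χ = 1, so G is edgeless and A = V
    have hχ1 : χ = 1 := by omega
    obtain ⟨g⟩ : G.Colorable 1 := (myChromNat_le_iff G).mp (le_of_eq hχ1)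
    have hnoadj : ∀ u w, ¬ G.Adj u w := fun u w hadj =>
      g.valid hadj (Subsingleton.elim _ _)
    have hdeg0 : ∀ v, G.degree v = 0 := by
      intro v
      rw [SimpleGraph.degree, Finset.card_eq_zero]
      ext w
      simp [hnoadj]
    have hV : Nonempty V := by
      by_contra hV
      have hemp : IsEmpty V := not_nonempty_iff.mp hV
      have := G.chromaticNumber_eq_zero_of_isEmpty
      rw [hχdef] at hχ
      simp [chromNat, this] at hχ
    obtain ⟨v⟩ := hV
    have hvA : v ∈ setA G := by
      simp only [setA, Set.mem_setOf_eq, hdeg0, ← hχdef, hχ1]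
    have ha0 : a = 0 := by omega
    obtain ⟨g0⟩ : (G.induce (setA G)).Colorable 0 := (myChromNat_le_iff _).mp (le_of_eq ha0)
    exact (g0 ⟨v, hvA⟩).elim0
  · -- main case : build a proper coloring with m colors
    obtain ⟨gA⟩ : (G.induce (setA G)).Colorable a :=
      (G.induce (setA G)).colorable_chromaticNumber_of_fintype
    have eB : ↥Bf ≃ Fin b := Fintype.equivFinOfCardEq (Fintype.card_coe Bf)
    set T : Set V := setA G ∪ setB G with hTdef
    set f0 : V → Fin m := fun w =>
      if hA : w ∈ setA G then ⟨(gA ⟨w, hA⟩).val, lt_of_lt_of_le (Fin.is_lt _) (by omega)⟩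
      else if hB : w ∈ Bf then ⟨a + (eB ⟨w, hB⟩).val,
        by have := (eB ⟨w, hB⟩).is_lt; omega⟩
      else ⟨0, hm0⟩ with hf0def
    have hAB : ∀ w, w ∈ setB G → w ∉ setA G := by
      intro w hw hw'
      simp only [setA, Set.mem_setOf_eq] at hw'
      simp only [setB, Set.mem_setOf_eq] at hw
      omega
    have hf0 : MyProperOn G T f0 := by
      intro u hu v hv hadj
      have hne := G.ne_of_adj hadj
      by_cases hA1 : u ∈ setA G <;> by_cases hA2 : v ∈ setA G
      · simp only [hf0def, dif_pos hA1, dif_pos hA2]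
        intro heq
        rw [Fin.mk.injEq] at heq
        exact gA.valid (show (G.induce (setA G)).Adj ⟨u, hA1⟩ ⟨v, hA2⟩ from hadj)
          (Fin.val_injective heq)
      · have hB2 : v ∈ Bf := Set.mem_toFinset.mpr (hv.resolve_left hA2)
        simp only [hf0def, dif_pos hA1, dif_neg hA2, dif_pos hB2]
        intro heq
        rw [Fin.mk.injEq] at heq
        have := (gA ⟨u, hA1⟩).is_lt
        omega
      · have hB1 : u ∈ Bf := Set.mem_toFinset.mpr (hu.resolve_left hA1)
        simp only [hf0def, dif_neg hA1, dif_pos hB1, dif_pos hA2]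
        intro heq
        rw [Fin.mk.injEq] at heq
        have := (gA ⟨v, hA2⟩).is_lt
        omega
      · have hB1 : u ∈ Bf := Set.mem_toFinset.mpr (hu.resolve_left hA1)
        have hB2 : v ∈ Bf := Set.mem_toFinset.mpr (hv.resolve_left hA2)
        simp only [hf0def, dif_neg hA1, dif_pos hB1, dif_neg hA2, dif_pos hB2]
        intro heq
        rw [Fin.mk.injEq, Nat.add_left_cancel_iff] at heq
        have : (⟨u, hB1⟩ : ↥Bf) = ⟨v, hB2⟩ := eB.injective (Fin.val_injective heq)
        exact hne (congrArg Subtype.val this)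
    obtain ⟨g, hg⟩ := myGreedy G T ((setC G).toFinset) f0
      (fun c hcm => by
        have := Set.mem_toFinset.mp hcm
        simpa [setC, ← hχdef] using this) hf0
    have hTS : T ∪ ↑((setC G).toFinset) = Set.univ := by
      ext w
      simp only [Set.coe_toFinset]
      simp only [hTdef, Set.mem_union, Set.coe_toFinset, Set.mem_univ, iff_true,
        setA, setB, setC, Set.mem_setOf_eq]
      omega
    rw [hTS] at hg
    have : chromNat G ≤ m := (myChromNat_le_iff G).mpr (myColorable_of_properOn G hg)
    omega

/-- If `G` is an NG-graph with `A_G ≠ ∅`, then `G[A_G]` is an NG-graph and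
`χ(G) = χ(G[A_G]) + |B_G|`. -/
theorem stmt12 (G : SimpleGraph V) [DecidableRel G.Adj] (hNG : IsNG G)
    (hA : setA G ≠ ∅) :
    IsNG (G.induce (setA G)) ∧
      chromNat G = chromNat (G.induce (setA G)) + (setB G).ncard := by
  classical
  set n := Fintype.card V with hndef
  set χ := chromNat G with hχdef
  set χc := chromNat Gᶜ with hχcdef
  have hNG' : χ + χc = n + 1 := by
    rw [hχdef, hχcdef, hndef, ← Nat.card_eq_fintype_card]
    exact hNG
  have hχn : χ ≤ n := (myChromNat_le_iff G).mpr (G.colorable_of_fintype)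
  have hχcn : χc ≤ n := (myChromNat_le_iff Gᶜ).mpr (Gᶜ.colorable_of_fintype)
  have hχ1 : 1 ≤ χ := by omega
  have hχc1 : 1 ≤ χc := by omega
  -- degrees in the complement
  have hdegc : ∀ v, Gᶜ.degree v = n - 1 - G.degree v := fun v => by
    rw [hndef]; exact G.degree_compl v
  have hdeglt : ∀ v, G.degree v < n := fun v => G.degree_lt_card_verts v
  -- the degree sets of the complement
  have hsetAc : setA Gᶜ = setA G := by
    ext v
    simp only [setA, Set.mem_setOf_eq, hdegc, ← hχcdef, ← hχdef]
    have h1 := hdeglt v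
    omega
  have hsetBc : setB Gᶜ = setC G := by
    ext v
    simp only [setB, setC, Set.mem_setOf_eq, hdegc, ← hχcdef, ← hχdef]
    have h1 := hdeglt v
    omega
  -- cardinalities
  set a' := (setA G).ncard with ha'def
  set b' := (setB G).ncard with hb'def
  set c' := (setC G).ncard with hc'def
  have hpart : a' + b' + c' = n := by
    rw [ha'def, hb'def, hc'def, Set.ncard_eq_toFinset_card', Set.ncard_eq_toFinset_card',
      Set.ncard_eq_toFinset_card']
    have hU : (setA G).toFinset ∪ (setB G).toFinset ∪ (setC G).toFinset = Finset.univ := by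
      ext v
      simp only [Finset.mem_union, Set.mem_toFinset]
      simp only [Finset.mem_union, Set.mem_toFinset, setA, setB, setC, Set.mem_setOf_eq,
        Finset.mem_univ, iff_true]
      omega
    have hd1 : Disjoint ((setA G).toFinset) ((setB G).toFinset) := by
      rw [Finset.disjoint_left]
      intro v hv hv'
      simp only [Set.mem_toFinset] at hv hv'
      simp only [Set.mem_toFinset, setA, setB, Set.mem_setOf_eq] at hv hv'
      omega
    have hd2 : Disjoint ((setA G).toFinset ∪ (setB G).toFinset) ((setC G).toFinset) := by
      rw [Finset.disjoint_left]
      intro v hv hv'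
      simp only [Finset.mem_union, Set.mem_toFinset] at hv hv'
      simp only [Finset.mem_union, Set.mem_toFinset, setA, setB, setC, Set.mem_setOf_eq]
        at hv hv'
      omega
    rw [← Finset.card_union_of_disjoint hd1, ← Finset.card_union_of_disjoint hd2, hU,
      Finset.card_univ]
  -- the two upper bounds
  set aG := chromNat (G.induce (setA G)) with haGdef
  set aGc := chromNat ((G.induce (setA G))ᶜ) with haGcdef
  have hU1 : χ ≤ aG + b' := myU1 G hχ1
  have hU2 : χc ≤ aGc + c' := by
    have := myU1 Gᶜ hχc1
    rw [hsetAc, hsetBc, myInduce_compl] at this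
    exact this
  -- the NG inequality for the induced subgraph
  have hcardA : Fintype.card ↥(setA G) = a' := by
    rw [ha'def, Set.ncard_eq_toFinset_card', Set.toFinset_card]
  have hNGA : aG + aGc ≤ a' + 1 := myNGineq a' ↥(setA G) (G.induce (setA G)) hcardA
  constructor
  · show chromNat (G.induce (setA G)) + chromNat ((G.induce (setA G))ᶜ) = _
    rw [← haGdef, ← haGcdef, Nat.card_eq_fintype_card, hcardA]
    omega
  · omega
end

section
/- Let G be a finite simple graph with vertex set partitioned as V = A ∪ B ∪ C (disjoint) where A is nonempty, G[A] is a complete graph on a ≥ 1 vertices, G[B] is a complete graph on b vertices, C is an independent set of c vertices, every vertex of A is adjacent to every vertex of B, and no vertex of A is adjacent to any vertex of C. Then χ(G) = a + b and χ(Ḡ) = c + 1; in particular χ(G) + χ(Ḡ) = n + 1, so G is an NG-graph. -/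
open SimpleGraph

variable {V : Type*} [Fintype V] [DecidableEq V]

/-- Sufficiency for Type 1 NG-graphs: if `V = A ∪ B ∪ C` with `A` a nonempty
clique, `B` a clique, `C` independent, all `A`–`B` edges present and no `A`–`C`
edges, then `χ(G) = |A| + |B|`, `χ(Ḡ) = |C| + 1`, and `G` is an NG-graph. -/
theorem stmt14 (G : SimpleGraph V) (A B C : Set V)
    (hunion : A ∪ B ∪ C = Set.univ)
    (hAB : Disjoint A B) (hAC : Disjoint A C) (hBC : Disjoint B C)
    (hAne : A.Nonempty)
    (hAclique : G.IsClique A) (hBclique : G.IsClique B)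
    (hCindep : IsIndepSet' G C)
    (hABadj : ∀ u ∈ A, ∀ v ∈ B, G.Adj u v)
    (hACnonadj : ∀ u ∈ A, ∀ w ∈ C, ¬ G.Adj u w) :
    chromNat G = A.ncard + B.ncard ∧ chromNat Gᶜ = C.ncard + 1 ∧
      chromNat G + chromNat Gᶜ = Fintype.card V + 1 := by

  classical
  obtain ⟨a0, ha0⟩ := hAne
  -- memberships
  have hmem : ∀ v : V, v ∈ A ∪ B ∨ v ∈ C := by
    intro v
    have : v ∈ A ∪ B ∪ C := hunion ▸ Set.mem_univ v
    rcases this with h | h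
    · exact Or.inl h
    · exact Or.inr h
  have hABC_disj : Disjoint (A ∪ B) C := Set.disjoint_union_left.mpr ⟨hAC, hBC⟩
  -- A ∪ B is a clique of G
  have hABclique : G.IsClique (A ∪ B) := by
    intro u hu v hv huv
    rcases hu with hu | hu <;> rcases hv with hv | hv
    · exact hAclique hu hv huv
    · exact hABadj u hu v hv
    · exact (hABadj v hv u hu).symm
    · exact hBclique hu hv huv
  -- insert a0 C is a clique of Gᶜ
  have ha0C : a0 ∉ C := fun h => (hAC.ne_of_mem ha0 h) rfl
  have hCclique : Gᶜ.IsClique (insert a0 C) := by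
    intro u hu v hv huv
    rw [compl_adj]
    refine ⟨huv, ?_⟩
    rcases hu with rfl | hu <;> rcases hv with rfl | hv
    · exact absurd rfl huv
    · exact hACnonadj u ha0 v hv
    · exact fun h => hACnonadj v ha0 u hu h.symm
    · exact hCindep u hu v hv
  -- cardinality bookkeeping
  have hABfin : (A ∪ B).Finite := Set.toFinite _
  have hCfin : C.Finite := Set.toFinite _
  have hABcard : (A ∪ B).ncard = A.ncard + B.ncard :=
    Set.ncard_union_eq hAB (Set.toFinite _) (Set.toFinite _)
  have htotal : A.ncard + B.ncard + C.ncard = Fintype.card V := by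
    rw [← hABcard, ← Set.ncard_union_eq hABC_disj hABfin hCfin, hunion,
      Set.ncard_univ, Nat.card_eq_fintype_card]
  -- coloring of G with A ∪ B colors
  haveI : Fintype ↥(A ∪ B) := Fintype.ofFinite _
  haveI : Fintype ↥C := Fintype.ofFinite _
  have cG : G.Coloring ↥(A ∪ B) := by
    refine SimpleGraph.Coloring.mk
      (fun v => if h : v ∈ A ∪ B then ⟨v, h⟩ else ⟨a0, Or.inl ha0⟩) ?_
    intro u v hadj heq
    by_cases hu : u ∈ A ∪ B <;> by_cases hv : v ∈ A ∪ B <;>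
      simp only [hu, hv, dif_pos, dif_neg, not_false_iff, Subtype.mk.injEq] at heq
    · exact G.ne_of_adj hadj heq
    · have hvC : v ∈ C := (hmem v).resolve_left hv
      have huA : u ∈ A := by have h' : u = a0 := congrArg Subtype.val heq; rw [h']; exact ha0
      exact hACnonadj u huA v hvC hadj
    · have huC : u ∈ C := (hmem u).resolve_left hu
      have hvA : v ∈ A := by have h' : a0 = v := congrArg Subtype.val heq; rw [← h']; exact ha0
      exact hACnonadj v hvA u huC hadj.symm
    · exact hCindep u ((hmem u).resolve_left hu) v ((hmem v).resolve_left hv) hadj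
  -- coloring of Gᶜ with C ⊕ 1 colors
  have cGc : Gᶜ.Coloring (Option ↥C) := by
    refine SimpleGraph.Coloring.mk
      (fun v => if h : v ∈ C then some ⟨v, h⟩ else none) ?_
    intro u v hadj heq
    rw [compl_adj] at hadj
    by_cases hu : u ∈ C <;> by_cases hv : v ∈ C <;>
      simp only [hu, hv, dif_pos, dif_neg, not_false_iff, Option.some.injEq,
        Subtype.mk.injEq, reduceCtorEq] at heq
    · exact hadj.1 heq
    · have hu' : u ∈ A ∪ B := (hmem u).resolve_right hu
      have hv' : v ∈ A ∪ B := (hmem v).resolve_right hv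
      exact hadj.2 (hABclique hu' hv' hadj.1)
  -- chromatic number of G
  have hGup : G.chromaticNumber ≤ (A.ncard + B.ncard : ℕ) := by
    have := cG.colorable.chromaticNumber_le
    rwa [← Nat.card_eq_fintype_card, Nat.card_coe_set_eq, hABcard] at this
  have hGlow : ((A.ncard + B.ncard : ℕ) : ℕ∞) ≤ G.chromaticNumber := by
    have h1 : G.IsClique (hABfin.toFinset : Finset V) := by rwa [Set.Finite.coe_toFinset]
    have := h1.card_le_chromaticNumber
    rwa [← Set.ncard_eq_toFinset_card (A ∪ B) hABfin, hABcard] at this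
  have hGchrom : G.chromaticNumber = (A.ncard + B.ncard : ℕ) := le_antisymm hGup hGlow
  -- chromatic number of Gᶜ
  have hCcard : Fintype.card (Option ↥C) = C.ncard + 1 := by
    rw [Fintype.card_option, ← Nat.card_eq_fintype_card, Nat.card_coe_set_eq]
  have hGcup : Gᶜ.chromaticNumber ≤ (C.ncard + 1 : ℕ) := by
    have := cGc.colorable.chromaticNumber_le
    rwa [hCcard] at this
  have hGclow : ((C.ncard + 1 : ℕ) : ℕ∞) ≤ Gᶜ.chromaticNumber := by
    have hfin : (insert a0 C).Finite := Set.toFinite _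
    have h1 : Gᶜ.IsClique (hfin.toFinset : Finset V) := by rwa [Set.Finite.coe_toFinset]
    have := h1.card_le_chromaticNumber
    rwa [← Set.ncard_eq_toFinset_card _ hfin, Set.ncard_insert_of_notMem ha0C hCfin] at this
  have hGcchrom : Gᶜ.chromaticNumber = (C.ncard + 1 : ℕ) := le_antisymm hGcup hGclow
  have e1 : chromNat G = A.ncard + B.ncard := by
    rw [chromNat, hGchrom, ENat.toNat_coe]
  have e2 : chromNat Gᶜ = C.ncard + 1 := by
    rw [chromNat, hGcchrom, ENat.toNat_coe]
  exact ⟨e1, e2, by omega⟩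
end

section
/- Let G be a finite simple graph with vertex set partitioned as V = A ∪ B ∪ C (disjoint) where A is a nonempty independent set of a ≥ 1 vertices, G[B] is a complete graph on b vertices, C is an independent set of c vertices, every vertex of A is adjacent to every vertex of B, and no vertex of A is adjacent to any vertex of C. Then χ(G) = b + 1 and χ(Ḡ) = a + c; in particular χ(G) + χ(Ḡ) = n + 1, so G is an NG-graph. -/
open SimpleGraph

variable {V : Type*} [Fintype V] [DecidableEq V]

lemma aux_chromG (G : SimpleGraph V) (A B C : Set V)
    (hunion : A ∪ B ∪ C = Set.univ)
    (hAB : Disjoint A B)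
    (hAne : A.Nonempty)
    (hAindep : ∀ u ∈ A, ∀ v ∈ A, ¬ G.Adj u v) (hBclique : G.IsClique B)
    (hCindep : ∀ u ∈ C, ∀ v ∈ C, ¬ G.Adj u v)
    (hABadj : ∀ u ∈ A, ∀ v ∈ B, G.Adj u v)
    (hACnonadj : ∀ u ∈ A, ∀ w ∈ C, ¬ G.Adj u w) :
    G.chromaticNumber = (B.ncard + 1 : ℕ) := by
  classical
  obtain ⟨a₀, ha₀⟩ := hAne
  let f : G.Coloring (Option ↥B) := Coloring.mk
    (fun v => if h : v ∈ B then some ⟨v, h⟩ else none)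
    (by
      intro u v huv
      by_cases hu : u ∈ B <;> by_cases hv : v ∈ B <;> simp [hu, hv]
      · exact huv.ne
      · exfalso
        have hu' : u ∈ A ∪ C := by
          have := Set.mem_univ u; rw [← hunion] at this
          rcases this with (h | h) | h
          exacts [Or.inl h, absurd h hu, Or.inr h]
        have hv' : v ∈ A ∪ C := by
          have := Set.mem_univ v; rw [← hunion] at this
          rcases this with (h | h) | h
          exacts [Or.inl h, absurd h hv, Or.inr h]
        rcases hu' with hu' | hu' <;> rcases hv' with hv' | hv'
        · exact hAindep u hu' v hv' huv
        · exact hACnonadj u hu' v hv' huv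
        · exact hACnonadj v hv' u hu' huv.symm
        · exact hCindep u hu' v hv' huv)
  have hB : B.Finite := Set.toFinite B
  have hcard : Fintype.card (Option ↥B) = B.ncard + 1 := by
    rw [Fintype.card_option, ← Nat.card_eq_fintype_card, Nat.card_coe_set_eq]
  have hle : G.chromaticNumber ≤ (B.ncard + 1 : ℕ) := by
    have := f.colorable.chromaticNumber_le
    rwa [hcard] at this
  have hclique : G.IsClique (insert a₀ hB.toFinset : Finset V) := by
    intro u hu v hv huv
    simp only [Finset.coe_insert, Set.mem_insert_iff, Set.Finite.coe_toFinset] at hu hv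
    rcases hu with rfl | hu <;> rcases hv with rfl | hv
    · exact absurd rfl huv
    · exact hABadj u ha₀ v hv
    · exact (hABadj v ha₀ u hu).symm
    · exact hBclique hu hv huv
  have hge : (B.ncard + 1 : ℕ) ≤ G.chromaticNumber := by
    have := hclique.card_le_chromaticNumber
    have hc : (insert a₀ hB.toFinset : Finset V).card = B.ncard + 1 := by
      rw [Finset.card_insert_of_notMem (by simp [hAB.ne_of_mem ha₀]; exact fun h => hAB.ne_of_mem ha₀ h rfl)]
      rw [Set.ncard_eq_toFinset_card B hB]
    rwa [hc] at this
  exact le_antisymm hle hge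

lemma aux_chromGc (G : SimpleGraph V) (A B C : Set V)
    (hunion : A ∪ B ∪ C = Set.univ)
    (hAC : Disjoint A C)
    (hAne : A.Nonempty)
    (hAindep : ∀ u ∈ A, ∀ v ∈ A, ¬ G.Adj u v) (hBclique : G.IsClique B)
    (hCindep : ∀ u ∈ C, ∀ v ∈ C, ¬ G.Adj u v)
    (hABadj : ∀ u ∈ A, ∀ v ∈ B, G.Adj u v)
    (hACnonadj : ∀ u ∈ A, ∀ w ∈ C, ¬ G.Adj u w) :
    Gᶜ.chromaticNumber = (A.ncard + C.ncard : ℕ) := by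
  classical
  obtain ⟨a₀, ha₀⟩ := hAne
  have hmemAC : ∀ v : V, v ∉ A ∪ C → v ∈ B := by
    intro v hv
    have := Set.mem_univ v; rw [← hunion] at this
    rcases this with (h | h) | h
    · exact absurd (Or.inl h) hv
    · exact h
    · exact absurd (Or.inr h) hv
  let f : Gᶜ.Coloring ↥(A ∪ C) := Coloring.mk
    (fun v => if h : v ∈ A ∪ C then ⟨v, h⟩ else ⟨a₀, Or.inl ha₀⟩)
    (by
      intro u v huv
      obtain ⟨hne, hnadj⟩ := huv
      by_cases hu : u ∈ A ∪ C <;> by_cases hv : v ∈ A ∪ C <;> simp [hu, hv, Subtype.ext_iff]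
      · exact hne
      · -- v ∈ B; if u = a₀ then adjacency
        rintro rfl
        exact hnadj (hABadj u ha₀ v (hmemAC v hv))
      · rintro rfl
        exact hnadj ((hABadj a₀ ha₀ u (hmemAC u hu)).symm)
      · exact absurd (hBclique (hmemAC u hu) (hmemAC v hv) hne) hnadj)
  have hcard : Fintype.card ↥(A ∪ C) = A.ncard + C.ncard := by
    rw [← Nat.card_eq_fintype_card, Nat.card_coe_set_eq, Set.ncard_union_eq hAC]
  have hle : Gᶜ.chromaticNumber ≤ (A.ncard + C.ncard : ℕ) := by
    have := f.colorable.chromaticNumber_le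
    rwa [hcard] at this
  have hAC' : (A ∪ C).Finite := Set.toFinite _
  have hclique : Gᶜ.IsClique (hAC'.toFinset : Finset V) := by
    intro u hu v hv huv
    simp only [Finset.coe_sort_coe, Set.Finite.coe_toFinset, Set.mem_union] at hu hv
    refine ⟨huv, ?_⟩
    rcases hu with hu | hu <;> rcases hv with hv | hv
    · exact hAindep u hu v hv
    · exact hACnonadj u hu v hv
    · exact fun h => hACnonadj v hv u hu h.symm
    · exact hCindep u hu v hv
  have hge : (A.ncard + C.ncard : ℕ) ≤ Gᶜ.chromaticNumber := by
    have := hclique.card_le_chromaticNumber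
    have hc : (hAC'.toFinset : Finset V).card = A.ncard + C.ncard := by
      rw [← Set.ncard_eq_toFinset_card _ hAC', Set.ncard_union_eq hAC]
    rwa [hc] at this
  exact le_antisymm hle hge
/-- Sufficiency for Type 2 NG-graphs: if `V = A ∪ B ∪ C` with `A` a nonempty
independent set, `B` a clique, `C` independent, all `A`–`B` edges present and no
`A`–`C` edges, then `χ(G) = |B| + 1`, `χ(Ḡ) = |A| + |C|`, and `G` is an
NG-graph. -/
theorem stmt15 (G : SimpleGraph V) (A B C : Set V)
    (hunion : A ∪ B ∪ C = Set.univ)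
    (hAB : Disjoint A B) (hAC : Disjoint A C) (hBC : Disjoint B C)
    (hAne : A.Nonempty)
    (hAindep : IsIndepSet' G A) (hBclique : G.IsClique B)
    (hCindep : IsIndepSet' G C)
    (hABadj : ∀ u ∈ A, ∀ v ∈ B, G.Adj u v)
    (hACnonadj : ∀ u ∈ A, ∀ w ∈ C, ¬ G.Adj u w) :
    chromNat G = B.ncard + 1 ∧ chromNat Gᶜ = A.ncard + C.ncard ∧
      chromNat G + chromNat Gᶜ = Fintype.card V + 1 := by
  classical
  have hAi : ∀ u ∈ A, ∀ v ∈ A, ¬ G.Adj u v := hAindep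
  have hCi : ∀ u ∈ C, ∀ v ∈ C, ¬ G.Adj u v := hCindep
  have h1 := aux_chromG G A B C hunion hAB hAne hAi hBclique hCi hABadj hACnonadj
  have h2 := aux_chromGc G A B C hunion hAC hAne hAi hBclique hCi hABadj hACnonadj
  have e1 : chromNat G = B.ncard + 1 := by rw [chromNat, h1, ENat.toNat_coe]
  have e2 : chromNat Gᶜ = A.ncard + C.ncard := by rw [chromNat, h2, ENat.toNat_coe]
  have hcardV : Fintype.card V = A.ncard + B.ncard + C.ncard := by
    rw [← Nat.card_eq_fintype_card, ← Set.ncard_univ, ← hunion,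
      Set.ncard_union_eq (by rw [Set.disjoint_union_left]; exact ⟨hAC, hBC⟩),
      Set.ncard_union_eq hAB]
  exact ⟨e1, e2, by rw [e1, e2, hcardV]; ring⟩
end

section
/- (i) If G is a Type 1 NG-graph and x ∈ A_G ∪ B_G, then there exists a proper coloring of G using χ(G) colors in which the color of x appears on no other vertex. (ii) If G is a Type 2 NG-graph and x ∈ B_G, then there exists a proper coloring of G using χ(G) colors in which the color of x appears on no other vertex. -/
open SimpleGraph

variable {V : Type*} [Fintype V] [DecidableEq V]

def ProperOn (G : SimpleGraph V) (S : Finset V) {k : ℕ} (f : V → Fin k) : Prop :=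
  ∀ u ∈ S, ∀ v ∈ S, G.Adj u v → f u ≠ f v

noncomputable def chromOn (G : SimpleGraph V) (S : Finset V) : ℕ :=
  sInf {k | ∃ f : V → Fin k, ProperOn G S f}

lemma chromOn_set_nonempty (G : SimpleGraph V) (S : Finset V) :
    {k | ∃ f : V → Fin k, ProperOn G S f}.Nonempty :=
  ⟨Fintype.card V, Fintype.equivFin V, fun u _ w _ hadj he =>
    G.ne_of_adj hadj ((Fintype.equivFin V).injective he)⟩

lemma chromOn_mem (G : SimpleGraph V) (S : Finset V) :
    ∃ f : V → Fin (chromOn G S), ProperOn G S f :=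
  Nat.sInf_mem (chromOn_set_nonempty G S)

lemma chromOn_le (G : SimpleGraph V) (S : Finset V) {k : ℕ} (f : V → Fin k)
    (hf : ProperOn G S f) : chromOn G S ≤ k :=
  Nat.sInf_le ⟨f, hf⟩

lemma chromOn_le_card (G : SimpleGraph V) (S : Finset V) : chromOn G S ≤ Fintype.card V :=
  chromOn_le G S (fun v => Fintype.equivFin V v) (fun u _ w _ hadj he =>
    G.ne_of_adj hadj ((Fintype.equivFin V).injective he))

lemma chromOn_pos (G : SimpleGraph V) (S : Finset V) [Nonempty V] : 1 ≤ chromOn G S := by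
  by_contra h
  push_neg at h
  rw [Nat.lt_one_iff] at h
  obtain ⟨f, -⟩ := chromOn_mem G S
  rw [h] at f
  exact (f (Classical.arbitrary V)).elim0

lemma exists_properOn_of_le (G : SimpleGraph V) (S : Finset V) {k : ℕ}
    (h : chromOn G S ≤ k) : ∃ f : V → Fin k, ProperOn G S f := by
  obtain ⟨f, hf⟩ := chromOn_mem G S
  exact ⟨Fin.castLE h ∘ f, fun u hu w hw hadj he =>
    hf u hu w hw hadj (Fin.castLE_injective h he)⟩

lemma chromOn_mono (G : SimpleGraph V) {S S' : Finset V} (h : S' ⊆ S) :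
    chromOn G S' ≤ chromOn G S := by
  obtain ⟨f, hf⟩ := chromOn_mem G S
  exact chromOn_le G S' f (fun u hu w hw hadj => hf u (h hu) w (h hw) hadj)

lemma chromOn_le_erase_add_one (G : SimpleGraph V) (S : Finset V) (v : V) :
    chromOn G S ≤ chromOn G (S.erase v) + 1 := by
  obtain ⟨f, hf⟩ := chromOn_mem G (S.erase v)
  refine chromOn_le G S (fun u => if u = v then Fin.last _ else (f u).castSucc) ?_
  intro u hu w hw hadj
  have hne := G.ne_of_adj hadj
  dsimp only
  split_ifs with h1 h2 h2
  · exact absurd (h1.trans h2.symm) hne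
  · exact (Fin.castSucc_lt_last (f w)).ne'
  · exact (Fin.castSucc_lt_last (f u)).ne
  · intro he
    exact hf u (Finset.mem_erase.mpr ⟨h1, hu⟩) w (Finset.mem_erase.mpr ⟨h2, hw⟩) hadj
      (Fin.castSucc_injective _ he)

lemma exists_color {k : ℕ} (s : Finset (Fin k)) (h : s.card < k) : ∃ c, c ∉ s := by
  by_contra hc
  push_neg at hc
  have : s = Finset.univ := Finset.eq_univ_iff_forall.mpr hc
  rw [this, Finset.card_univ, Fintype.card_fin] at h
  exact lt_irrefl _ h

lemma properOn_extend (G : SimpleGraph V) [DecidableRel G.Adj] {k : ℕ} {S : Finset V} {v : V}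
    {f : V → Fin k} (hf : ProperOn G (S.erase v) f)
    (hd : (G.neighborFinset v ∩ S.erase v).card < k) :
    ∃ f' : V → Fin k, ProperOn G S f' := by
  obtain ⟨c, hc⟩ := exists_color ((G.neighborFinset v ∩ S.erase v).image f)
    (lt_of_le_of_lt Finset.card_image_le hd)
  refine ⟨Function.update f v c, ?_⟩
  intro u hu w hw hadj
  have hne := G.ne_of_adj hadj
  rw [Function.update_apply, Function.update_apply]
  split_ifs with h1 h2 h2
  · exact absurd (h1.trans h2.symm) hne
  · intro he
    exact hc (he ▸ Finset.mem_image_of_mem f (Finset.mem_inter.mpr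
      ⟨(G.mem_neighborFinset ..).mpr (h1 ▸ hadj), Finset.mem_erase.mpr ⟨h2, hw⟩⟩))
  · intro he
    exact hc (he.symm ▸ Finset.mem_image_of_mem f (Finset.mem_inter.mpr
      ⟨(G.mem_neighborFinset ..).mpr (h2 ▸ hadj.symm), Finset.mem_erase.mpr ⟨h1, hu⟩⟩))
  · exact hf u (Finset.mem_erase.mpr ⟨h1, hu⟩) w (Finset.mem_erase.mpr ⟨h2, hw⟩) hadj

lemma greedy (G : SimpleGraph V) [DecidableRel G.Adj] {k : ℕ} (T : Finset V) :
    (∀ z ∈ T, G.degree z < k) → ∀ (S : Finset V) (f : V → Fin k), ProperOn G S f →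
    ∃ f' : V → Fin k, ProperOn G (S ∪ T) f' := by
  induction T using Finset.induction_on with
  | empty => intro _ S f hf; exact ⟨f, by simpa using hf⟩
  | @insert a T' ha IH =>
    intro hT S f hf
    obtain ⟨f', hf'⟩ := IH (fun z hz => hT z (Finset.mem_insert_of_mem hz)) S f hf
    have hdeg : G.degree a < k := hT a (Finset.mem_insert_self a T')
    obtain ⟨c, hc⟩ := exists_color ((G.neighborFinset a).image f')
      (lt_of_le_of_lt Finset.card_image_le hdeg)
    refine ⟨Function.update f' a c, ?_⟩
    rw [Finset.union_insert]
    intro u hu w hw hadj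
    have hne := G.ne_of_adj hadj
    rw [Function.update_apply, Function.update_apply]
    split_ifs with h1 h2 h2
    · exact absurd (h1.trans h2.symm) hne
    · intro he
      exact hc (he ▸ Finset.mem_image_of_mem f' ((G.mem_neighborFinset ..).mpr (h1 ▸ hadj)))
    · intro he
      exact hc (he.symm ▸ Finset.mem_image_of_mem f'
        ((G.mem_neighborFinset ..).mpr (h2 ▸ hadj.symm)))
    · exact hf' u ((Finset.mem_insert.mp hu).resolve_left h1) w
        ((Finset.mem_insert.mp hw).resolve_left h2) hadj

lemma erase_eq_nbr_union (G : SimpleGraph V) [DecidableRel G.Adj] (x : V) :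
    Finset.univ.erase x = G.neighborFinset x ∪ Gᶜ.neighborFinset x := by
  ext v
  simp only [Finset.mem_erase, Finset.mem_union, mem_neighborFinset, Finset.mem_univ,
    and_true, compl_adj]
  constructor
  · intro hv
    by_cases h : G.Adj x v
    · exact Or.inl h
    · exact Or.inr ⟨Ne.symm hv, h⟩
  · rintro (h | ⟨h1, h2⟩)
    · exact (G.ne_of_adj h).symm
    · exact h1.symm

lemma NG_ineq (G : SimpleGraph V) [DecidableRel G.Adj] :
    ∀ (n : ℕ) (S : Finset V), S.card = n → S.Nonempty →
      chromOn G S + chromOn Gᶜ S ≤ S.card + 1 := by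
  intro n
  induction n using Nat.strong_induction_on with
  | _ n IH =>
    intro S hcard hne
    obtain ⟨v, hv⟩ := hne
    have hpos : 1 ≤ S.card := Finset.card_pos.mpr ⟨v, hv⟩
    rcases Nat.lt_or_ge S.card 2 with h2 | h2
    · have hone : ∀ (H : SimpleGraph V), chromOn H S ≤ 1 := by
        intro H
        refine chromOn_le H S (fun _ => 0) ?_
        intro u hu w hw hadj
        have huw : u = w := Finset.card_le_one.mp (by omega) u hu w hw
        exact absurd (huw ▸ hadj) (H.loopless.irrefl w)
      have := hone G
      have := hone Gᶜ
      omega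
    · set S' := S.erase v with hS'
      have hc' : S'.card = S.card - 1 := Finset.card_erase_of_mem hv
      have hne' : S'.Nonempty := Finset.card_pos.mp (by omega)
      have hIH := IH (S.card - 1) (by omega) S' hc' hne'
      rw [hc'] at hIH
      set a := chromOn G S' with ha
      set b := chromOn Gᶜ S' with hb
      set d := (G.neighborFinset v ∩ S').card with hd
      set d' := (Gᶜ.neighborFinset v ∩ S').card with hd'
      have hpart : (G.neighborFinset v ∩ S') ∪ (Gᶜ.neighborFinset v ∩ S') = S' := by
        rw [← Finset.union_inter_distrib_right, ← erase_eq_nbr_union]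
        exact Finset.inter_eq_right.mpr (fun u hu =>
          Finset.mem_erase.mpr ⟨(Finset.mem_erase.mp hu).1, Finset.mem_univ u⟩)
      have hdisj : Disjoint (G.neighborFinset v ∩ S') (Gᶜ.neighborFinset v ∩ S') := by
        rw [Finset.disjoint_left]
        intro u hu1 hu2
        have h1 := (mem_neighborFinset ..).mp (Finset.mem_inter.mp hu1).1
        have h2 := (mem_neighborFinset ..).mp (Finset.mem_inter.mp hu2).1
        exact ((compl_adj ..).mp h2).2 h1
      have hsum : d + d' = S.card - 1 := by
        rw [hd, hd', ← Finset.card_union_of_disjoint hdisj, hpart, hc']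
      have hfresh1 : chromOn G S ≤ a + 1 := chromOn_le_erase_add_one G S v
      have hfresh2 : chromOn Gᶜ S ≤ b + 1 := chromOn_le_erase_add_one Gᶜ S v
      by_cases hda : d < a
      · obtain ⟨f, hf⟩ := chromOn_mem G S'
        obtain ⟨f', hf'⟩ := properOn_extend G hf hda
        have h1 : chromOn G S ≤ a := chromOn_le G S f' hf'
        omega
      · by_cases hdb : d' < b
        · obtain ⟨f, hf⟩ := chromOn_mem Gᶜ S'
          obtain ⟨f', hf'⟩ := properOn_extend Gᶜ hf hdb
          have h1 : chromOn Gᶜ S ≤ b := chromOn_le Gᶜ S f' hf'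
          omega
        · omega

lemma chromNat_eq_chromOn (G : SimpleGraph V) : chromNat G = chromOn G Finset.univ := by
  have h1 : G.chromaticNumber = (sInf {n | G.Colorable n} : ℕ) :=
    (G.colorable_of_fintype).chromaticNumber_eq_sInf
  have h2 : {n | G.Colorable n} = {k | ∃ f : V → Fin k, ProperOn G Finset.univ f} := by
    ext k
    simp only [Set.mem_setOf_eq]
    constructor
    · intro h
      obtain ⟨C⟩ := h
      exact ⟨C, fun u _ w _ hadj => C.valid hadj⟩
    · rintro ⟨f, hf⟩
      exact ⟨SimpleGraph.Coloring.mk f fun {u w} hadj =>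
        hf u (Finset.mem_univ u) w (Finset.mem_univ w) hadj⟩
  rw [chromNat, h1, ENat.toNat_coe, chromOn, h2]

lemma theta_le_of_B (G : SimpleGraph V) [DecidableRel G.Adj]
    (hNG' : chromOn G Finset.univ + chromOn Gᶜ Finset.univ = Fintype.card V + 1)
    (z : V) (hz : chromOn G Finset.univ ≤ G.degree z) :
    chromOn Gᶜ Finset.univ ≤ chromOn Gᶜ (Finset.univ.erase z) := by
  haveI : Nonempty V := ⟨z⟩
  have hdeg_lt : G.degree z < Fintype.card V := G.degree_lt_card_verts z
  have ht1 : chromOn Gᶜ Finset.univ ≤ chromOn Gᶜ (Finset.univ.erase z) + 1 :=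
    chromOn_le_erase_add_one Gᶜ Finset.univ z
  have htpos : 1 ≤ chromOn Gᶜ (Finset.univ.erase z) := chromOn_pos Gᶜ _
  have hχpos : 1 ≤ chromOn G Finset.univ := chromOn_pos G _
  have hdc : Gᶜ.degree z = Fintype.card V - 1 - G.degree z := G.degree_compl z
  have hsub : Gᶜ.neighborFinset z ∩ Finset.univ.erase z = Gᶜ.neighborFinset z :=
    Finset.inter_eq_left.mpr (fun u hu => Finset.mem_erase.mpr
      ⟨(Gᶜ.ne_of_adj ((mem_neighborFinset ..).mp hu)).symm, Finset.mem_univ u⟩)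
  have hd : (Gᶜ.neighborFinset z ∩ Finset.univ.erase z).card <
      chromOn Gᶜ (Finset.univ.erase z) := by
    rw [hsub]
    have : (Gᶜ.neighborFinset z).card = Gᶜ.degree z := rfl
    omega
  obtain ⟨f, hf⟩ := chromOn_mem Gᶜ (Finset.univ.erase z)
  obtain ⟨f', hf'⟩ := properOn_extend Gᶜ hf hd
  exact chromOn_le Gᶜ Finset.univ f' hf'

lemma chromOn_erase_le_of_B (G : SimpleGraph V) [DecidableRel G.Adj]
    (hNG' : chromOn G Finset.univ + chromOn Gᶜ Finset.univ = Fintype.card V + 1)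
    (z : V) (hz : chromOn G Finset.univ ≤ G.degree z) :
    chromOn G (Finset.univ.erase z) ≤ chromOn G Finset.univ - 1 := by
  haveI : Nonempty V := ⟨z⟩
  have hχpos : 1 ≤ chromOn G Finset.univ := chromOn_pos G _
  have hdeg_lt : G.degree z < Fintype.card V := G.degree_lt_card_verts z
  have hcard : (Finset.univ.erase z).card = Fintype.card V - 1 := by
    rw [Finset.card_erase_of_mem (Finset.mem_univ z), Finset.card_univ]
  have hne : (Finset.univ.erase z).Nonempty := Finset.card_pos.mp (by omega)
  have hNGe := NG_ineq G (Fintype.card V - 1) (Finset.univ.erase z) hcard hne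
  rw [hcard] at hNGe
  have hthe := theta_le_of_B G hNG' z hz
  omega

lemma build_coloring (G : SimpleGraph V) (x : V) (hχ : 1 ≤ chromOn G Finset.univ)
    (h : chromOn G (Finset.univ.erase x) ≤ chromOn G Finset.univ - 1) :
    ∃ f : V → Fin (chromOn G Finset.univ),
      (∀ u v, G.Adj u v → f u ≠ f v) ∧ ∀ v, v ≠ x → f v ≠ f x := by
  obtain ⟨g, hg⟩ := exists_properOn_of_le G _ h
  refine ⟨fun v => if v = x then ⟨chromOn G Finset.univ - 1, by omega⟩
    else ⟨(g v : ℕ), by have := (g v).isLt; omega⟩, ?_, ?_⟩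
  · intro u v hadj
    have hne := G.ne_of_adj hadj
    dsimp only
    split_ifs with h1 h2 h2
    · exact absurd (h1.trans h2.symm) hne
    · intro he
      rw [Fin.mk.injEq] at he
      have := (g v).isLt
      omega
    · intro he
      rw [Fin.mk.injEq] at he
      have := (g u).isLt
      omega
    · intro he
      rw [Fin.mk.injEq] at he
      exact hg u (Finset.mem_erase.mpr ⟨h1, Finset.mem_univ u⟩) v
        (Finset.mem_erase.mpr ⟨h2, Finset.mem_univ v⟩) hadj (Fin.val_injective he)
  · intro v hv
    dsimp only
    rw [if_neg hv, if_pos rfl]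
    intro he
    rw [Fin.mk.injEq] at he
    have := (g v).isLt
    omega

lemma chromOn_erase_le_of_A (G : SimpleGraph V) [DecidableRel G.Adj]
    (hNG' : chromOn G Finset.univ + chromOn Gᶜ Finset.univ = Fintype.card V + 1)
    (hcl : ∀ z, z ≠ x → G.degree z = chromOn G Finset.univ - 1 → G.Adj x z)
    (hx : G.degree x = chromOn G Finset.univ - 1)
    (hn2 : 2 ≤ Fintype.card V) :
    chromOn G (Finset.univ.erase x) ≤ chromOn G Finset.univ - 1 := by
  haveI : Nonempty V := ⟨x⟩
  set n := Fintype.card V with hn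
  set χ := chromOn G Finset.univ with hχ
  set θ := chromOn Gᶜ Finset.univ with hθ
  have hχpos : 1 ≤ χ := chromOn_pos G _
  have hθpos : 1 ≤ θ := chromOn_pos Gᶜ _
  have hχn : χ ≤ n := chromOn_le_card G _
  by_contra hcon
  push_neg at hcon
  have hu_le : chromOn G (Finset.univ.erase x) ≤ χ :=
    chromOn_mono G (Finset.erase_subset x Finset.univ)
  have hcarde : (Finset.univ.erase x).card = n - 1 := by
    rw [Finset.card_erase_of_mem (Finset.mem_univ x), Finset.card_univ]
  have hnee : (Finset.univ.erase x).Nonempty := Finset.card_pos.mp (by omega)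
  have hNGe := NG_ineq G (n - 1) (Finset.univ.erase x) hcarde hnee
  rw [hcarde] at hNGe
  set t := chromOn Gᶜ (Finset.univ.erase x) with htdef
  have ht1 : θ ≤ t + 1 := chromOn_le_erase_add_one Gᶜ Finset.univ x
  have ht : t = θ - 1 := by omega
  obtain ⟨g, hg⟩ := chromOn_mem Gᶜ (Finset.univ.erase x)
  set M := Gᶜ.neighborFinset x with hM
  have hMadj : ∀ z ∈ M, Gᶜ.Adj x z := fun z hz => (mem_neighborFinset ..).mp hz
  have hMdeg : M.card = Gᶜ.degree x := rfl
  have hdc : Gᶜ.degree x = n - 1 - G.degree x := G.degree_compl x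
  have hMt : M.card = t := by omega
  have hsurj : ∀ j : Fin t, ∃ z ∈ M, g z = j := by
    by_contra hcc
    push_neg at hcc
    obtain ⟨j, hj⟩ := hcc
    have hprop : ProperOn Gᶜ Finset.univ (Function.update g x j) := by
      intro u hu w hw hadj
      have hne := Gᶜ.ne_of_adj hadj
      rw [Function.update_apply, Function.update_apply]
      split_ifs with h1 h2 h2
      · exact absurd (h1.trans h2.symm) hne
      · exact fun he => hj w ((mem_neighborFinset ..).mpr (h1 ▸ hadj)) he.symm
      · exact fun he => hj u ((mem_neighborFinset ..).mpr (h2 ▸ hadj.symm)) he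
      · exact hg u (Finset.mem_erase.mpr ⟨h1, hu⟩) w (Finset.mem_erase.mpr ⟨h2, hw⟩) hadj
    have := chromOn_le Gᶜ Finset.univ _ hprop
    omega
  have himg : M.image g = Finset.univ :=
    Finset.eq_univ_iff_forall.mpr (fun j => by
      obtain ⟨z, hz, he⟩ := hsurj j
      exact Finset.mem_image.mpr ⟨z, hz, he⟩)
  have hinj : Set.InjOn g ↑M := Finset.card_image_iff.mp (by
    rw [himg, Finset.card_univ, Fintype.card_fin, hMt])
  have hzdeg : ∀ z ∈ M, G.degree z < χ - 1 := by
    intro z hz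
    have hzadj := (compl_adj ..).mp (hMadj z hz)
    rcases lt_trichotomy (G.degree z) (χ - 1) with h | h | h
    · exact h
    · exact absurd (hcl z (Ne.symm hzadj.1) h) hzadj.2
    · exfalso
      have hB := theta_le_of_B G hNG' z (by omega)
      have hprop : ProperOn Gᶜ (Finset.univ.erase z) (Function.update g x (g z)) := by
        intro u hu w hw hadj
        have hne := Gᶜ.ne_of_adj hadj
        rw [Function.update_apply, Function.update_apply]
        split_ifs with h1 h2 h2
        · exact absurd (h1.trans h2.symm) hne
        · intro he
          have hwM : w ∈ M := (mem_neighborFinset ..).mpr (h1 ▸ hadj)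
          exact (Finset.mem_erase.mp hw).1
            (hinj (Finset.mem_coe.mpr hwM) (Finset.mem_coe.mpr hz) he.symm)
        · intro he
          have huM : u ∈ M := (mem_neighborFinset ..).mpr (h2 ▸ hadj.symm)
          exact (Finset.mem_erase.mp hu).1
            (hinj (Finset.mem_coe.mpr huM) (Finset.mem_coe.mpr hz) he)
        · exact hg u (Finset.mem_erase.mpr ⟨h1, Finset.mem_univ u⟩) w
            (Finset.mem_erase.mpr ⟨h2, Finset.mem_univ w⟩) hadj
      have := chromOn_le Gᶜ (Finset.univ.erase z) _ hprop
      omega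
  by_cases hχ2 : χ < 2
  · obtain ⟨z, hz⟩ := Finset.card_pos.mp (show 0 < M.card by omega)
    have := hzdeg z hz
    omega
  · have hcardnb : Fintype.card ↥(G.neighborFinset x) = χ - 1 := by
      rw [Fintype.card_coe]
      exact hx
    let e := Fintype.equivFinOfCardEq hcardnb
    have hf0 : ProperOn G (G.neighborFinset x)
        (fun v => if h : v ∈ G.neighborFinset x then e ⟨v, h⟩ else ⟨0, by omega⟩) := by
      intro u hu w hw hadj he
      simp only [dif_pos hu, dif_pos hw] at he
      exact G.ne_of_adj hadj (Subtype.ext_iff.mp (e.injective he))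
    obtain ⟨f', hf'⟩ := greedy G M (fun z hz => hzdeg z hz) (G.neighborFinset x) _ hf0
    have hle : chromOn G (Finset.univ.erase x) ≤ χ - 1 := by
      rw [erase_eq_nbr_union G x]
      exact chromOn_le _ _ f' hf'
    omega

/-- (i) In a Type 1 NG-graph, every `x ∈ A_G ∪ B_G` is uniquely colored in some
proper coloring with `χ(G)` colors. (ii) In a Type 2 NG-graph, the same holds
for every `x ∈ B_G`. -/
theorem stmt17 (G : SimpleGraph V) [DecidableRel G.Adj] (hNG : IsNG G) :
    (G.IsClique (setA G) →
      ∀ x ∈ setA G ∪ setB G, ∃ f : V → Fin (chromNat G),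
        IsProperColoring G f ∧ ∀ v : V, v ≠ x → f v ≠ f x) ∧
    (IsIndepSet' G (setA G) →
      ∀ x ∈ setB G, ∃ f : V → Fin (chromNat G),
        IsProperColoring G f ∧ ∀ v : V, v ≠ x → f v ≠ f x) := by
  have hχeq : chromNat G = chromOn G Finset.univ := chromNat_eq_chromOn G
  have hθeq : chromNat Gᶜ = chromOn Gᶜ Finset.univ := chromNat_eq_chromOn Gᶜ
  have hNG' : chromOn G Finset.univ + chromOn Gᶜ Finset.univ = Fintype.card V + 1 := by
    have h := hNG
    rw [IsNG, Nat.card_eq_fintype_card, hχeq, hθeq] at h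
    exact h
  have main : ∀ x : V, chromOn G (Finset.univ.erase x) ≤ chromOn G Finset.univ - 1 →
      ∃ f : V → Fin (chromNat G), IsProperColoring G f ∧ ∀ v : V, v ≠ x → f v ≠ f x := by
    intro x hle
    haveI : Nonempty V := ⟨x⟩
    have hχpos : 1 ≤ chromOn G Finset.univ := chromOn_pos G _
    obtain ⟨f, hf1, hf2⟩ := build_coloring G x hχpos hle
    rw [show (chromNat G) = chromOn G Finset.univ from hχeq]
    exact ⟨f, hf1, hf2⟩
  have mainB : ∀ x ∈ setB G, ∃ f : V → Fin (chromNat G),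
      IsProperColoring G f ∧ ∀ v : V, v ≠ x → f v ≠ f x := by
    intro x hxB
    haveI : Nonempty V := ⟨x⟩
    have hχpos : 1 ≤ chromOn G Finset.univ := chromOn_pos G _
    have hdegx : chromOn G Finset.univ ≤ G.degree x := by
      have h : G.degree x > chromNat G - 1 := hxB
      rw [hχeq] at h
      omega
    exact main x (chromOn_erase_le_of_B G hNG' x hdegx)
  constructor
  · intro hclique x hx
    haveI : Nonempty V := ⟨x⟩
    have hχpos : 1 ≤ chromOn G Finset.univ := chromOn_pos G _
    rcases hx with hA | hB
    · have hxdeg : G.degree x = chromOn G Finset.univ - 1 := by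
        have h : G.degree x = chromNat G - 1 := hA
        rw [hχeq] at h
        exact h
      by_cases hn2 : 2 ≤ Fintype.card V
      · have hcl : ∀ z, z ≠ x → G.degree z = chromOn G Finset.univ - 1 → G.Adj x z := by
          intro z hzx hdz
          refine hclique hA ?_ (Ne.symm hzx)
          show G.degree z = chromNat G - 1
          rw [hχeq]
          exact hdz
        exact main x (chromOn_erase_le_of_A G hNG' hcl hxdeg hn2)
      · have hall : ∀ v : V, v = x := by
          intro v
          exact Fintype.card_le_one_iff.mp (by omega) v x
        refine ⟨fun _ => ⟨0, by rw [hχeq]; omega⟩, ?_, ?_⟩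
        · intro u v hadj
          have huv : u = v := (hall u).trans (hall v).symm
          rw [huv] at hadj
          exact absurd hadj (G.loopless.irrefl v)
        · intro v hv
          exact absurd (hall v) hv
    · exact mainB x hB
  · intro _ x hx
    exact mainB x hx
end
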